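/- arXiv:2603.24640 — 9 statements merged into one kernel-verified Lean document; each statement's English description precedes it below -/
import Mathlib

section
/- Let n ≥ 1. Let s : ℝ → ℝ satisfy: 0 < s(a) ≤ 1 for every a > 0, s is antitone on (0,∞), and a ↦ log s(a) is convex on (0,∞). Let p : Fin n → ℝ with 0 < p i < 1 for all i, and let α, β : Fin n → ℝ with α i > 0 and β i > 0, satisfying the similar-ordering conditions (p i − p j)·(α i − α j) ≤ 0 and (p i − p j)·(β i − β j) ≤ 0 for all i, j. If α is weakly supermajorized by β, i.e. for every k = 1,…,n the sum of the k smallest entries of α is at most the sum of the k smallest entries of β, then ∏_{i=1}^n p i · s(α i) ≥ ∏_{i=1}^n p i · s(β i). -/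
/-!
With common occurrence probabilities the factors `p i` cancel, and taking logarithms the claim
becomes `∑ f (β i) ≤ ∑ f (α i)` for the convex antitone function `f = log ∘ s`: the Tomić–Weyl
inequality. Sort both tuples increasingly, to `a` and `b`, and let `g i` be the right derivative
of `f` at `b i`. These slopes are nonpositive and increasing in `i`, while the partial sums of
`a - b` are nonpositive by weak supermajorization, so Abel summation gives
`0 ≤ ∑ g i * (a i - b i) ≤ ∑ (f (a i) - f (b i))`, the last step being the subgradient inequality.
-/

open Finset

/-- Sum of the `k` smallest entries of the tuple `a`. -/
noncomputable def kSmallestSum {n : ℕ} (a : Fin n → ℝ) (k : ℕ) : ℝ :=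
  ∑ i ∈ Finset.univ.filter (fun i : Fin n => (i : ℕ) < k), a (Tuple.sort a i)

namespace Finset

theorem sum_mul_nonneg_of_monotoneOn_of_partial_sum_nonpos {ι R : Type*} [LinearOrder ι]
    [CommRing R] [LinearOrder R] [IsOrderedRing R] (s : Finset ι) {g d : ι → R}
    (hg : MonotoneOn g s) (hg_nonpos : ∀ i ∈ s, g i ≤ 0)
    (hd : ∀ j ∈ s, ∑ i ∈ s with i ≤ j, d i ≤ 0) :
    0 ≤ ∑ i ∈ s, g i * d i := by
  induction s using Finset.induction_on_max generalizing g with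
  | empty => simp
  | insert a s ha ih =>
    have has : a ∉ s := fun h => lt_irrefl a (ha a h)
    have hsplit : ∑ i ∈ insert a s, g i * d i
        = ∑ i ∈ s, (g i - g a) * d i + g a * ∑ i ∈ insert a s, d i := by
      simp only [sum_insert has, sub_mul, sum_sub_distrib, mul_add, mul_sum]
      ring
    rw [hsplit]
    refine add_nonneg (ih (g := fun i => g i - g a) ?_ ?_ ?_) ?_
    · exact fun i hi j hj hij =>
        sub_le_sub_right (hg (mem_insert_of_mem hi) (mem_insert_of_mem hj) hij) _
    · exact fun i hi =>
        sub_nonpos.2 (hg (mem_insert_of_mem hi) (mem_insert_self a s) (ha i hi).le)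
    · intro j hj
      have h := hd j (mem_insert_of_mem hj)
      rwa [filter_insert, if_neg (not_le.2 (ha j hj))] at h
    · have h := hd a (mem_insert_self a s)
      rw [filter_true_of_mem fun i hi => (mem_insert.1 hi).elim le_of_eq fun h => (ha i h).le]
        at h
      exact mul_nonneg_of_nonpos_of_nonpos (hg_nonpos a (mem_insert_self a s)) h

end Finset

namespace ConvexOn

open Set

variable {S : Set ℝ} {f : ℝ → ℝ} {x y : ℝ}

theorem rightDeriv_mul_sub_le (hf : ConvexOn ℝ S f) (hx : x ∈ interior S) (hy : y ∈ S) :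
    derivWithin f (Ioi x) x * (y - x) ≤ f y - f x := by
  rcases lt_trichotomy y x with hyx | rfl | hxy
  · have h := (hf.slope_le_leftDeriv_of_mem_interior hy hx hyx).trans
      (hf.leftDeriv_le_rightDeriv_of_mem_interior hx)
    rw [slope_def_field, div_le_iff₀ (sub_pos.2 hyx)] at h
    linarith
  · simp
  · have h := hf.rightDeriv_le_slope_of_mem_interior hx hy hxy
    rwa [slope_def_field, le_div_iff₀ (sub_pos.2 hxy)] at h

theorem rightDeriv_nonpos (hf : ConvexOn ℝ S f) (hf_anti : AntitoneOn f S)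
    (hx : x ∈ interior S) : derivWithin f (Ioi x) x ≤ 0 := by
  obtain ⟨t, hxt, htS⟩ :=
    Filter.nonempty_of_mem (inter_mem_nhdsWithin (Ioi x) (mem_interior_iff_mem_nhds.1 hx))
  exact (hf.rightDeriv_le_slope_of_mem_interior hx htS hxt).trans
    (hf_anti.slope_nonpos (interior_subset hx) htS)

theorem sum_le_sum_of_antitoneOn_of_partial_sum_le {ι : Type*} [LinearOrder ι]
    (hf : ConvexOn ℝ S f) (hf_anti : AntitoneOn f S) (s : Finset ι) {a b : ι → ℝ}
    (ha : ∀ i ∈ s, a i ∈ S) (hb : ∀ i ∈ s, b i ∈ interior S) (hb_mono : MonotoneOn b s)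
    (hab : ∀ j ∈ s, ∑ i ∈ s with i ≤ j, a i ≤ ∑ i ∈ s with i ≤ j, b i) :
    ∑ i ∈ s, f (b i) ≤ ∑ i ∈ s, f (a i) := by
  have habel : 0 ≤ ∑ i ∈ s, derivWithin f (Ioi (b i)) (b i) * (a i - b i) :=
    sum_mul_nonneg_of_monotoneOn_of_partial_sum_nonpos s
      (fun i hi j hj hij => hf.monotoneOn_rightDeriv (hb i hi) (hb j hj) (hb_mono hi hj hij))
      (fun i hi => hf.rightDeriv_nonpos hf_anti (hb i hi))
      (fun j hj => by rw [sum_sub_distrib]; exact sub_nonpos.2 (hab j hj))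
  have hsub := sum_le_sum fun i hi => hf.rightDeriv_mul_sub_le (hb i hi) (ha i hi)
  rw [sum_sub_distrib] at hsub
  linarith

end ConvexOn

theorem kSmallestSum_succ {n : ℕ} (a : Fin n → ℝ) (j : Fin n) :
    kSmallestSum a (j + 1) = ∑ i with i ≤ j, a (Tuple.sort a i) := by
  simp only [kSmallestSum, Nat.lt_succ_iff, Fin.val_fin_le]

theorem stmt_0_general {n : ℕ} (s : ℝ → ℝ)
    (hs_pos : ∀ a > 0, 0 < s a)
    (hs_anti : AntitoneOn s (Set.Ioi 0))
    (hs_logconv : ConvexOn ℝ (Set.Ioi 0) (fun a => Real.log (s a)))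
    (p α β : Fin n → ℝ)
    (hp : ∀ i, 0 < p i ∧ p i < 1)
    (hα : ∀ i, 0 < α i) (hβ : ∀ i, 0 < β i)
    (hmaj : ∀ k, 1 ≤ k → k ≤ n → kSmallestSum α k ≤ kSmallestSum β k) :
    ∏ i, p i * s (β i) ≤ ∏ i, p i * s (α i) := by
  have hlog_anti : AntitoneOn (fun a => Real.log (s a)) (Set.Ioi 0) := fun x hx y hy hxy =>
    Real.log_le_log (hs_pos y hy) (hs_anti hx hy hxy)
  have hsorted : ∑ i, Real.log (s (β (Tuple.sort β i)))
      ≤ ∑ i, Real.log (s (α (Tuple.sort α i))) := by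
    refine hs_logconv.sum_le_sum_of_antitoneOn_of_partial_sum_le hlog_anti univ
      (fun i _ => hα _) (fun i _ => by rw [interior_Ioi]; exact hβ _)
      ((Tuple.monotone_sort β).monotoneOn _) fun j _ => ?_
    rw [← kSmallestSum_succ, ← kSmallestSum_succ]
    exact hmaj _ j.val.succ_pos j.isLt
  rw [Equiv.sum_comp (Tuple.sort β) fun i => Real.log (s (β i)),
    Equiv.sum_comp (Tuple.sort α) fun i => Real.log (s (α i)),
    ← Real.log_prod fun i _ => (hs_pos _ (hβ i)).ne',
    ← Real.log_prod fun i _ => (hs_pos _ (hα i)).ne',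
    Real.log_le_log_iff (prod_pos fun i _ => hs_pos _ (hβ i))
      (prod_pos fun i _ => hs_pos _ (hα i))] at hsorted
  rw [prod_mul_distrib, prod_mul_distrib]
  exact mul_le_mul_of_nonneg_left hsorted (prod_nonneg fun i _ => (hp i).1.le)

/-- Theorem 3.1: common occurrence probabilities, smallest claim amounts,
usual stochastic order under weak supermajorization of the severity parameters. -/
theorem stmt_0 {n : ℕ} (hn : 1 ≤ n) (s : ℝ → ℝ)
    (hs_pos : ∀ a > 0, 0 < s a) (hs_le : ∀ a > 0, s a ≤ 1)
    (hs_anti : AntitoneOn s (Set.Ioi 0))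
    (hs_logconv : ConvexOn ℝ (Set.Ioi 0) (fun a => Real.log (s a)))
    (p α β : Fin n → ℝ)
    (hp : ∀ i, 0 < p i ∧ p i < 1)
    (hα : ∀ i, 0 < α i) (hβ : ∀ i, 0 < β i)
    (hsimα : ∀ i j, (p i - p j) * (α i - α j) ≤ 0)
    (hsimβ : ∀ i j, (p i - p j) * (β i - β j) ≤ 0)
    (hmaj : ∀ k, 1 ≤ k → k ≤ n → kSmallestSum α k ≤ kSmallestSum β k) :
    ∏ i, p i * s (β i) ≤ ∏ i, p i * s (α i) :=
  stmt_0_general s hs_pos hs_anti hs_logconv p α β hp hα hβ hmaj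
end

section
/- Let n ≥ 1. Let s : ℝ → ℝ with s(a) > 0 for every a > 0, and let g : ℝ → ℝ satisfy: 0 < g(t) < 1 for every t > 0, g is antitone on (0,∞), and t ↦ log g(t) is convex on (0,∞). Let α : Fin n → ℝ with α i > 0, and v, u : Fin n → ℝ with v i > 0 and u i > 0, satisfying (v i − v j)·(α i − α j) ≥ 0 and (u i − u j)·(α i − α j) ≥ 0 for all i, j. If v is weakly supermajorized by u, i.e. for every k = 1,…,n the sum of the k smallest entries of v is at most the sum of the k smallest entries of u, then ∏_{i=1}^n g(v i) · s(α i) ≥ ∏_{i=1}^n g(u i) · s(α i). -/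
open Finset

/-- Abel summation nonnegativity: if `c` is nondecreasing and nonpositive and all
partial sums of `d` are nonpositive, then `∑ c i * d i ≥ 0`. -/
lemma abel_nonneg : ∀ (n : ℕ) (c d : ℕ → ℝ),
    (∀ i j, i ≤ j → j < n → c i ≤ c j) → (∀ i, i < n → c i ≤ 0) →
    (∀ k, k ≤ n → ∑ i ∈ range k, d i ≤ 0) → 0 ≤ ∑ i ∈ range n, c i * d i := by
  intro n
  induction n with
  | zero => intro c d _ _ _; simp
  | succ n ih =>
    intro c d hmono hnonpos hD
    have hdecomp : ∑ i ∈ range (n + 1), c i * d i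
        = (∑ i ∈ range (n + 1), (c i - c n) * d i) + c n * ∑ i ∈ range (n + 1), d i := by
      rw [Finset.mul_sum, ← Finset.sum_add_distrib]
      exact Finset.sum_congr rfl fun i _ => by ring
    have h1 : 0 ≤ ∑ i ∈ range (n + 1), (c i - c n) * d i := by
      rw [Finset.sum_range_succ, sub_self, zero_mul, add_zero]
      refine ih (fun i => c i - c n) d ?_ ?_ ?_
      · intro i j hij hj
        exact sub_le_sub_right (hmono i j hij (Nat.lt_succ_of_lt hj)) (c n)
      · intro i hi
        exact sub_nonpos.2 (hmono i n (Nat.le_of_lt hi) (Nat.lt_succ_self n))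
      · intro k hk
        exact hD k (Nat.le_succ_of_le hk)
    have h2 : 0 ≤ c n * ∑ i ∈ range (n + 1), d i := by
      nlinarith [hnonpos n (Nat.lt_succ_self n), hD (n + 1) le_rfl]
    linarith

/-- Key majorization lemma: if `a`, `b` are nondecreasing positive sequences with
`∑_{i<k} a i ≤ ∑_{i<k} b i` for all `k ≤ n`, and `φ` is convex and antitone on `(0,∞)`,
then `∑ φ (b i) ≤ ∑ φ (a i)`. -/
lemma key_majorization (n : ℕ) (φ : ℝ → ℝ)
    (hconv : ConvexOn ℝ (Set.Ioi 0) φ) (hanti : AntitoneOn φ (Set.Ioi 0))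
    (a b : ℕ → ℝ)
    (ha_pos : ∀ i, i < n → 0 < a i) (hb_pos : ∀ i, i < n → 0 < b i)
    (ha_mono : ∀ i j, i ≤ j → j < n → a i ≤ a j)
    (hb_mono : ∀ i j, i ≤ j → j < n → b i ≤ b j)
    (hsum : ∀ k, k ≤ n → ∑ i ∈ range k, a i ≤ ∑ i ∈ range k, b i) :
    ∑ i ∈ range n, φ (b i) ≤ ∑ i ∈ range n, φ (a i) := by
  rcases Nat.eq_zero_or_pos n with rfl | hpos
  · simp
  set m : ℝ := min (a 0) (b 0) / 2 with hm
  have hmin_pos : 0 < min (a 0) (b 0) := lt_min (ha_pos 0 hpos) (hb_pos 0 hpos)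
  have hm_pos : 0 < m := by positivity
  have hm_lt : m < min (a 0) (b 0) := half_lt_self hmin_pos
  have hma : ∀ i, i < n → m < a i := fun i hi =>
    lt_of_lt_of_le (lt_of_lt_of_le hm_lt (min_le_left _ _)) (ha_mono 0 i (Nat.zero_le i) hi)
  have hmb : ∀ i, i < n → m < b i := fun i hi =>
    lt_of_lt_of_le (lt_of_lt_of_le hm_lt (min_le_right _ _)) (hb_mono 0 i (Nat.zero_le i) hi)
  -- the finite set of "left points" for the subgradient at `b i`
  set X : ℕ → Finset ℝ := fun i =>
    insert m (((Finset.range n).filter (fun j => a j < b i)).image a) with hX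
  have hXne : ∀ i, (X i).Nonempty := fun i => Finset.insert_nonempty _ _
  set c : ℕ → ℝ := fun i => (X i).sup' (hXne i) (fun x => (φ (b i) - φ x) / (b i - x)) with hc
  have hXmem : ∀ i, i < n → ∀ x ∈ X i, 0 < x ∧ x < b i := by
    intro i hi x hx
    rcases Finset.mem_insert.1 hx with rfl | hx
    · exact ⟨hm_pos, hmb i hi⟩
    · rcases Finset.mem_image.1 hx with ⟨j, hj, rfl⟩
      rcases Finset.mem_filter.1 hj with ⟨hjn, hjlt⟩
      exact ⟨ha_pos j (Finset.mem_range.1 hjn), hjlt⟩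
  have hc_nonpos : ∀ i, i < n → c i ≤ 0 := by
    intro i hi
    apply Finset.sup'_le
    intro x hx
    obtain ⟨hx0, hxb⟩ := hXmem i hi x hx
    have h1 : φ (b i) ≤ φ x :=
      hanti (Set.mem_Ioi.2 hx0) (Set.mem_Ioi.2 (lt_trans hx0 hxb)) (le_of_lt hxb)
    exact div_nonpos_iff.2 (Or.inr ⟨by linarith, by linarith⟩)
  have hc_mono : ∀ i j, i ≤ j → j < n → c i ≤ c j := by
    intro i j hij hj
    have hi : i < n := lt_of_le_of_lt hij hj
    apply Finset.sup'_le
    intro x hx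
    obtain ⟨hx0, hxb⟩ := hXmem i hi x hx
    have hbij : b i ≤ b j := hb_mono i j hij hj
    have hxbj : x < b j := lt_of_lt_of_le hxb hbij
    have hxXj : x ∈ X j := by
      rcases Finset.mem_insert.1 hx with rfl | hx'
      · exact Finset.mem_insert_self _ _
      · rcases Finset.mem_image.1 hx' with ⟨l, hl, rfl⟩
        rcases Finset.mem_filter.1 hl with ⟨hln, hllt⟩
        exact Finset.mem_insert_of_mem
          (Finset.mem_image.2 ⟨l, Finset.mem_filter.2 ⟨hln, lt_of_lt_of_le hllt hbij⟩, rfl⟩)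
    have hsec : (φ (b i) - φ x) / (b i - x) ≤ (φ (b j) - φ x) / (b j - x) :=
      hconv.secant_mono (Set.mem_Ioi.2 hx0) (Set.mem_Ioi.2 (lt_trans hx0 hxb))
        (Set.mem_Ioi.2 (lt_trans hx0 hxbj)) (ne_of_gt hxb) (ne_of_gt hxbj) hbij
    refine le_trans hsec ?_
    simp only [hc]
    exact Finset.le_sup' (fun x => (φ (b j) - φ x) / (b j - x)) hxXj
  have hsupport : ∀ i, i < n → c i * (a i - b i) ≤ φ (a i) - φ (b i) := by
    intro i hi
    have hai : (0:ℝ) < a i := ha_pos i hi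
    have hbi : (0:ℝ) < b i := hb_pos i hi
    rcases lt_trichotomy (a i) (b i) with hlt | heq | hgt
    · have haX : a i ∈ X i :=
        Finset.mem_insert_of_mem (Finset.mem_image.2
          ⟨i, Finset.mem_filter.2 ⟨Finset.mem_range.2 hi, hlt⟩, rfl⟩)
      have h1 : (φ (b i) - φ (a i)) / (b i - a i) ≤ c i := by
        simp only [hc]
        exact Finset.le_sup' (fun x => (φ (b i) - φ x) / (b i - x)) haX
      have hba : (0:ℝ) < b i - a i := by linarith
      have h2 : c i * (a i - b i) ≤ ((φ (b i) - φ (a i)) / (b i - a i)) * (a i - b i) :=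
        mul_le_mul_of_nonpos_right h1 (by linarith)
      have h3 : ((φ (b i) - φ (a i)) / (b i - a i)) * (a i - b i) = φ (a i) - φ (b i) := by
        field_simp
        ring
      linarith
    · rw [heq]; simp
    · have h1 : c i ≤ (φ (a i) - φ (b i)) / (a i - b i) := by
        apply Finset.sup'_le
        intro x hx
        obtain ⟨hx0, hxb⟩ := hXmem i hi x hx
        have hsec : (φ x - φ (b i)) / (x - b i) ≤ (φ (a i) - φ (b i)) / (a i - b i) :=
          hconv.secant_mono (Set.mem_Ioi.2 hbi) (Set.mem_Ioi.2 hx0) (Set.mem_Ioi.2 hai)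
            (ne_of_lt hxb) (ne_of_gt hgt) (le_of_lt (lt_trans hxb hgt))
        have hrw : (φ (b i) - φ x) / (b i - x) = (φ x - φ (b i)) / (x - b i) := by
          rw [← neg_sub (φ x), ← neg_sub x, neg_div_neg_eq]
        rw [hrw]; exact hsec
      have hab : (0:ℝ) < a i - b i := by linarith
      have h2 : c i * (a i - b i) ≤ ((φ (a i) - φ (b i)) / (a i - b i)) * (a i - b i) :=
        mul_le_mul_of_nonneg_right h1 (le_of_lt hab)
      have h3 : ((φ (a i) - φ (b i)) / (a i - b i)) * (a i - b i) = φ (a i) - φ (b i) :=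
        div_mul_cancel₀ _ (ne_of_gt hab)
      linarith
  have habel : 0 ≤ ∑ i ∈ range n, c i * (a i - b i) := by
    refine abel_nonneg n c (fun i => a i - b i) hc_mono hc_nonpos ?_
    intro k hk
    rw [Finset.sum_sub_distrib]
    linarith [hsum k hk]
  have hfinal : ∑ i ∈ range n, c i * (a i - b i) ≤ ∑ i ∈ range n, (φ (a i) - φ (b i)) :=
    Finset.sum_le_sum fun i hi => hsupport i (Finset.mem_range.1 hi)
  rw [Finset.sum_sub_distrib] at hfinal
  linarith

/-- `kSmallestSum` as a range sum of the sorted tuple. -/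
lemma kSmallestSum_eq_range {n : ℕ} (w : Fin n → ℝ) (k : ℕ) (hk : k ≤ n) :
    kSmallestSum w k
      = ∑ i ∈ range k, (if h : i < n then w (Tuple.sort w ⟨i, h⟩) else 1) := by
  unfold kSmallestSum
  rw [Finset.sum_filter]
  have h1 : ∑ i : Fin n, (if (i : ℕ) < k then w (Tuple.sort w i) else 0)
      = ∑ i ∈ range n, (if i < k then (if h : i < n then w (Tuple.sort w ⟨i, h⟩) else 1) else 0) := by
    rw [← Fin.sum_univ_eq_sum_range
      (fun i => if i < k then (if h : i < n then w (Tuple.sort w ⟨i, h⟩) else 1) else 0) n]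
    refine Finset.sum_congr rfl fun i _ => ?_
    by_cases hik : (i : ℕ) < k
    · simp [hik, i.isLt]
    · simp [hik]
  rw [h1, ← Finset.sum_filter]
  have h2 : (Finset.range n).filter (fun i => i < k) = Finset.range k := by
    ext x
    simp only [Finset.mem_filter, Finset.mem_range]
    exact ⟨fun h => h.2, fun h => ⟨lt_of_lt_of_le h hk, h⟩⟩
  rw [h2]

/-- Theorem 3.2: common severity parameters, smallest claim amounts,
usual stochastic order under weak supermajorization of the transformed
occurrence probabilities. -/
theorem stmt_1 {n : ℕ} (hn : 1 ≤ n) (s g : ℝ → ℝ)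
    (hs_pos : ∀ a > 0, 0 < s a)
    (hg : ∀ t > 0, 0 < g t ∧ g t < 1)
    (hg_anti : AntitoneOn g (Set.Ioi 0))
    (hg_logconv : ConvexOn ℝ (Set.Ioi 0) (fun t => Real.log (g t)))
    (α v u : Fin n → ℝ)
    (hα : ∀ i, 0 < α i) (hv : ∀ i, 0 < v i) (hu : ∀ i, 0 < u i)
    (hsimv : ∀ i j, 0 ≤ (v i - v j) * (α i - α j))
    (hsimu : ∀ i j, 0 ≤ (u i - u j) * (α i - α j))
    (hmaj : ∀ k, 1 ≤ k → k ≤ n → kSmallestSum v k ≤ kSmallestSum u k) :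
    ∏ i, g (u i) * s (α i) ≤ ∏ i, g (v i) * s (α i) := by
  have hgu : ∀ i, 0 < g (u i) := fun i => (hg _ (hu i)).1
  have hgv : ∀ i, 0 < g (v i) := fun i => (hg _ (hv i)).1
  set φ : ℝ → ℝ := fun t => Real.log (g t) with hφ
  -- sorted sequences extended to ℕ
  set a : ℕ → ℝ := fun i => if h : i < n then v (Tuple.sort v ⟨i, h⟩) else 1 with ha
  set b : ℕ → ℝ := fun i => if h : i < n then u (Tuple.sort u ⟨i, h⟩) else 1 with hb
  have ha_pos : ∀ i, i < n → 0 < a i := by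
    intro i hi; simp only [ha, dif_pos hi]; exact hv _
  have hb_pos : ∀ i, i < n → 0 < b i := by
    intro i hi; simp only [hb, dif_pos hi]; exact hu _
  have ha_mono : ∀ i j, i ≤ j → j < n → a i ≤ a j := by
    intro i j hij hj
    have hi : i < n := lt_of_le_of_lt hij hj
    simp only [ha, dif_pos hi, dif_pos hj]
    exact Tuple.monotone_sort v (show (⟨i, hi⟩ : Fin n) ≤ ⟨j, hj⟩ from hij)
  have hb_mono : ∀ i j, i ≤ j → j < n → b i ≤ b j := by
    intro i j hij hj
    have hi : i < n := lt_of_le_of_lt hij hj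
    simp only [hb, dif_pos hi, dif_pos hj]
    exact Tuple.monotone_sort u (show (⟨i, hi⟩ : Fin n) ≤ ⟨j, hj⟩ from hij)
  have hanti : AntitoneOn φ (Set.Ioi 0) := by
    intro x hx y hy hxy
    exact Real.log_le_log ((hg y hy).1) (hg_anti hx hy hxy)
  have hsum : ∀ k, k ≤ n → ∑ i ∈ range k, a i ≤ ∑ i ∈ range k, b i := by
    intro k hk
    rcases Nat.eq_zero_or_pos k with rfl | hk1
    · simp
    · have := hmaj k hk1 hk
      rw [kSmallestSum_eq_range v k hk, kSmallestSum_eq_range u k hk] at this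
      exact this
  have hkey : ∑ i ∈ range n, φ (b i) ≤ ∑ i ∈ range n, φ (a i) :=
    key_majorization n φ hg_logconv hanti a b ha_pos hb_pos ha_mono hb_mono hsum
  -- translate sums over range n back to sums over Fin n
  have hsum_b : ∑ i ∈ range n, φ (b i) = ∑ i, φ (u i) := by
    rw [← Fin.sum_univ_eq_sum_range (fun i => φ (b i)) n]
    have h1 : ∀ i : Fin n, φ (b (i : ℕ)) = φ (u (Tuple.sort u i)) := by
      intro i; simp [hb, i.isLt]
    rw [Finset.sum_congr rfl (fun i _ => h1 i)]
    exact Equiv.sum_comp (Tuple.sort u) (fun i => φ (u i))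
  have hsum_a : ∑ i ∈ range n, φ (a i) = ∑ i, φ (v i) := by
    rw [← Fin.sum_univ_eq_sum_range (fun i => φ (a i)) n]
    have h1 : ∀ i : Fin n, φ (a (i : ℕ)) = φ (v (Tuple.sort v i)) := by
      intro i; simp [ha, i.isLt]
    rw [Finset.sum_congr rfl (fun i _ => h1 i)]
    exact Equiv.sum_comp (Tuple.sort v) (fun i => φ (v i))
  have hlog : ∑ i, φ (u i) ≤ ∑ i, φ (v i) := by
    rw [← hsum_a, ← hsum_b]; exact hkey
  have hprod : ∏ i, g (u i) ≤ ∏ i, g (v i) := by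
    have hu' : ∏ i, g (u i) = Real.exp (∑ i, φ (u i)) := by
      rw [Real.exp_sum]
      exact Finset.prod_congr rfl fun i _ => (Real.exp_log (hgu i)).symm
    have hv' : ∏ i, g (v i) = Real.exp (∑ i, φ (v i)) := by
      rw [Real.exp_sum]
      exact Finset.prod_congr rfl fun i _ => (Real.exp_log (hgv i)).symm
    rw [hu', hv']
    exact Real.exp_le_exp.2 hlog
  calc ∏ i, g (u i) * s (α i) = (∏ i, g (u i)) * ∏ i, s (α i) := Finset.prod_mul_distrib
    _ ≤ (∏ i, g (v i)) * ∏ i, s (α i) :=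
        mul_le_mul_of_nonneg_right hprod
          (Finset.prod_nonneg fun i _ => le_of_lt (hs_pos _ (hα i)))
    _ = ∏ i, g (v i) * s (α i) := Finset.prod_mul_distrib.symm
end

section
/- Let n ≥ 1. Let s : ℝ → ℝ satisfy 0 < s(a) ≤ 1 for every a > 0, s antitone on (0,∞) and log∘s convex on (0,∞). Let g : ℝ → ℝ satisfy 0 < g(t) < 1 for every t > 0, g antitone on (0,∞) and log∘g convex on (0,∞). Let v, u, α, β : Fin n → ℝ be positive and nondecreasing tuples (v 1 ≤ … ≤ v n, and similarly for u, α, β) such that for every k = 1,…,n: Σ_{i=1}^k α i ≤ Σ_{i=1}^k β i and Σ_{i=1}^k v i ≤ Σ_{i=1}^k u i. Let q₁, q₂ : {1,…,n} → ℝ be nonnegative with Σ_{m=1}^n q₁(m) = Σ_{m=1}^n q₂(m) = 1 and Σ_{m=k}^n q₁(m) ≤ Σ_{m=k}^n q₂(m) for every k. Then Σ_{m=1}^n q₁(m) · ∏_{i=1}^m g(v i)·s(α i) ≥ Σ_{m=1}^n q₂(m) · ∏_{i=1}^m g(u i)·s(β i). -/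
open Finset

/-!
Taking logarithms, each partial product `∏_{i<m} g(vᵢ) s(αᵢ)` dominates `∏_{i<m} g(uᵢ) s(βᵢ)`
by the Tomić–Weyl inequality: for a convex decreasing `φ` and increasing sequences `a`, `b`
with `∑_{i<k} aᵢ ≤ ∑_{i<k} bᵢ` for all `k`, one has `∑ φ(bᵢ) ≤ ∑ φ(aᵢ)`. This follows by Abel
summation of `φ(aᵢ) - φ(bᵢ) = cᵢ (aᵢ - bᵢ)`, where the chord slopes `cᵢ` of `φ` increase along the
sequences and are nonpositive. The partial products decrease in `m`, their factors lying in
`(0, 1]`, so a second Abel summation, against the tail sums of `q₁` and `q₂`, turns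
`N₁ ≤_st N₂` into the claimed inequality.
-/

/-- Sum of the first `k` entries of the tuple `a`. -/
noncomputable def prefixSum {n : ℕ} (a : Fin n → ℝ) (k : ℕ) : ℝ :=
  ∑ i ∈ Finset.univ.filter (fun i : Fin n => (i : ℕ) < k), a i

/-- Product of the first `m` entries of the tuple `c`. -/
noncomputable def prefixProd {n : ℕ} (c : Fin n → ℝ) (m : ℕ) : ℝ :=
  ∏ i ∈ Finset.univ.filter (fun i : Fin n => (i : ℕ) < m), c i

theorem sum_range_mul_nonneg_of_monotoneOn {m : ℕ} {d e : ℕ → ℝ}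
    (hd : MonotoneOn d (Set.Iio m)) (hd_nonpos : ∀ i < m, d i ≤ 0)
    (he : ∀ k ≤ m, ∑ j ∈ range k, e j ≤ 0) :
    0 ≤ ∑ i ∈ range m, d i * e i := by
  rcases m.eq_zero_or_pos with rfl | hm
  · simp
  have hparts := sum_range_by_parts d e m
  simp only [smul_eq_mul] at hparts
  rw [hparts, sub_nonneg]
  refine (sum_nonpos fun i hi => ?_).trans
    (mul_nonneg_of_nonpos_of_nonpos (hd_nonpos _ (by omega)) (he m le_rfl))
  have hi : i + 1 < m := by rw [mem_range] at hi; omega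
  exact mul_nonpos_of_nonneg_of_nonpos
    (sub_nonneg.2 (hd (Set.mem_Iio.2 (by omega)) hi i.le_succ)) (he _ hi.le)

/-- At `x = y` the right derivative stands in for the chord slope: being a subgradient, it keeps
the chord slopes of a convex function monotone in both endpoints. -/
noncomputable def chordSlope (φ : ℝ → ℝ) (x y : ℝ) : ℝ :=
  if x = y then derivWithin φ (Set.Ioi x) x else slope φ x y

theorem chordSlope_mul_sub (φ : ℝ → ℝ) (x y : ℝ) : chordSlope φ x y * (x - y) = φ x - φ y := by
  unfold chordSlope
  split_ifs with h
  · simp [h]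
  · rw [slope_comm, mul_comm, ← smul_eq_mul, sub_smul_slope, vsub_eq_sub]

namespace ConvexOn

variable {φ : ℝ → ℝ} {S : Set ℝ} {x y x' y' : ℝ}

theorem chordSlope_mem_Icc (hφ : ConvexOn ℝ S φ) (hS : IsOpen S) (hx : x ∈ S) (hy : y ∈ S) :
    chordSlope φ x y ∈ Set.Icc (derivWithin φ (Set.Ioi (min x y)) (min x y))
      (derivWithin φ (Set.Ioi (max x y)) (max x y)) := by
  have key : ∀ {x y}, x ∈ S → y ∈ S → x < y → slope φ x y ∈
      Set.Icc (derivWithin φ (Set.Ioi x) x) (derivWithin φ (Set.Ioi y) y) := fun hx hy hxy =>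
    ⟨hφ.rightDeriv_le_slope_of_mem_interior (hS.interior_eq.ge hx) hy hxy,
      (hφ.slope_le_leftDeriv_of_mem_interior hx (hS.interior_eq.ge hy) hxy).trans
        (hφ.leftDeriv_le_rightDeriv_of_mem_interior (hS.interior_eq.ge hy))⟩
  rcases lt_trichotomy x y with hxy | rfl | hxy
  · rw [chordSlope, if_neg hxy.ne, min_eq_left hxy.le, max_eq_right hxy.le]
    exact key hx hy hxy
  · simp [chordSlope]
  · rw [chordSlope, if_neg hxy.ne', min_eq_right hxy.le, max_eq_left hxy.le, slope_comm]
    exact key hy hx hxy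

theorem slope_le_slope (hφ : ConvexOn ℝ S φ) (hx : x ∈ S) (hy : y ∈ S) (hx' : x' ∈ S)
    (hy' : y' ∈ S) (hxx' : x ≤ x') (hyy' : y ≤ y') (hxy : x ≠ y) (hxy' : x' ≠ y') :
    slope φ x y ≤ slope φ x' y' := by
  by_cases hxy'' : x = y'
  · subst hxy''
    have hyx' : y ≠ x' := by
      rintro rfl
      exact hxy (le_antisymm hxx' hyy')
    calc slope φ x y = slope φ y x := slope_comm _ _ _
      _ ≤ slope φ y x' := hφ.slope_mono hy ⟨hx, hxy⟩ ⟨hx', hyx'.symm⟩ hxx'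
      _ = slope φ x' y := slope_comm _ _ _
      _ ≤ slope φ x' x := hφ.slope_mono hx' ⟨hy, hyx'⟩ ⟨hx, hxy'.symm⟩ hyy'
  · calc slope φ x y ≤ slope φ x y' := hφ.slope_mono hx ⟨hy, Ne.symm hxy⟩ ⟨hy', Ne.symm hxy''⟩ hyy'
      _ = slope φ y' x := slope_comm _ _ _
      _ ≤ slope φ y' x' := hφ.slope_mono hy' ⟨hx, hxy''⟩ ⟨hx', hxy'⟩ hxx'
      _ = slope φ x' y' := slope_comm _ _ _

theorem chordSlope_le_chordSlope (hφ : ConvexOn ℝ S φ) (hS : IsOpen S) (hx : x ∈ S) (hy : y ∈ S)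
    (hx' : x' ∈ S) (hy' : y' ∈ S) (hxx' : x ≤ x') (hyy' : y ≤ y') :
    chordSlope φ x y ≤ chordSlope φ x' y' := by
  have hR := hφ.monotoneOn_rightDeriv.mono hS.interior_eq.symm.subset
  by_cases hxy : x = y
  · subst hxy
    calc chordSlope φ x x = derivWithin φ (Set.Ioi x) x := if_pos rfl
      _ ≤ derivWithin φ (Set.Ioi (min x' y')) (min x' y') :=
        hR hx (min_rec' S hx' hy') (le_min hxx' hyy')
      _ ≤ chordSlope φ x' y' := (hφ.chordSlope_mem_Icc hS hx' hy').1
  by_cases hxy' : x' = y'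
  · subst hxy'
    calc chordSlope φ x y ≤ derivWithin φ (Set.Ioi (max x y)) (max x y) :=
          (hφ.chordSlope_mem_Icc hS hx hy).2
      _ ≤ derivWithin φ (Set.Ioi x') x' := hR (max_rec' S hx hy) hx' (max_le hxx' hyy')
      _ = chordSlope φ x' x' := (if_pos rfl).symm
  rw [chordSlope, chordSlope, if_neg hxy, if_neg hxy']
  exact hφ.slope_le_slope hx hy hx' hy' hxx' hyy' hxy hxy'

theorem chordSlope_nonpos (hφ : ConvexOn ℝ S φ) (hS : IsOpen S) (hφa : AntitoneOn φ S)
    (hx : x ∈ S) (hy : y ∈ S) : chordSlope φ x y ≤ 0 := by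
  unfold chordSlope
  split_ifs with hxy
  · obtain ⟨z, hxz, hzS⟩ : ∃ z, x < z ∧ z ∈ S := Filter.Eventually.exists_gt (hS.mem_nhds hx)
    exact (hφ.rightDeriv_le_slope_of_mem_interior (hS.interior_eq.ge hx) hzS hxz).trans
      (hφa.slope_nonpos hx hzS)
  · exact hφa.slope_nonpos hx hy

theorem sum_range_le_sum_range_of_antitoneOn (hφ : ConvexOn ℝ S φ) (hS : IsOpen S)
    (hφa : AntitoneOn φ S) {m : ℕ} {a b : ℕ → ℝ} (ha : ∀ i < m, a i ∈ S) (hb : ∀ i < m, b i ∈ S)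
    (ham : MonotoneOn a (Set.Iio m)) (hbm : MonotoneOn b (Set.Iio m))
    (hab : ∀ k ≤ m, ∑ i ∈ range k, a i ≤ ∑ i ∈ range k, b i) :
    ∑ i ∈ range m, φ (b i) ≤ ∑ i ∈ range m, φ (a i) := by
  have habel := sum_range_mul_nonneg_of_monotoneOn (d := fun i => chordSlope φ (a i) (b i))
    (e := fun i => a i - b i) (fun i hi j hj hij => hφ.chordSlope_le_chordSlope hS (ha i hi)
      (hb i hi) (ha j hj) (hb j hj) (ham hi hj hij) (hbm hi hj hij))
    (fun i hi => hφ.chordSlope_nonpos hS hφa (ha i hi) (hb i hi))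
    (fun k hk => by rw [sum_sub_distrib, sub_nonpos]; exact hab k hk)
  simp only [chordSlope_mul_sub, sum_sub_distrib, sub_nonneg] at habel
  exact habel

end ConvexOn

theorem prod_range_le_prod_range_of_convexOn_log {S : Set ℝ} (hS : IsOpen S) {f : ℝ → ℝ}
    (hf : ∀ x ∈ S, 0 < f x) (hfa : AntitoneOn f S) (hfc : ConvexOn ℝ S fun x => Real.log (f x))
    {m : ℕ} {a b : ℕ → ℝ} (ha : ∀ i < m, a i ∈ S) (hb : ∀ i < m, b i ∈ S)
    (ham : MonotoneOn a (Set.Iio m)) (hbm : MonotoneOn b (Set.Iio m))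
    (hab : ∀ k ≤ m, ∑ i ∈ range k, a i ≤ ∑ i ∈ range k, b i) :
    ∏ i ∈ range m, f (b i) ≤ ∏ i ∈ range m, f (a i) := by
  have hexp : ∀ c : ℕ → ℝ, (∀ i < m, c i ∈ S) →
      ∏ i ∈ range m, f (c i) = Real.exp (∑ i ∈ range m, Real.log (f (c i))) := fun c hc => by
    rw [Real.exp_sum]
    exact prod_congr rfl fun i hi => (Real.exp_log (hf _ (hc i (mem_range.1 hi)))).symm
  rw [hexp b hb, hexp a ha, Real.exp_le_exp]
  exact hfc.sum_range_le_sum_range_of_antitoneOn hS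
    (fun x hx y hy hxy => Real.log_le_log (hf y hy) (hfa hx hy hxy)) ha hb ham hbm hab

@[to_additive]
theorem prod_filter_val_lt {M : Type*} [CommMonoid M] {n k : ℕ} (hk : k ≤ n) (f : ℕ → M) :
    ∏ i ∈ univ.filter (fun i : Fin n => (i : ℕ) < k), f i = ∏ j ∈ range k, f j := by
  have hrange : (range n).filter (· < k) = range k := by
    ext j; simp only [mem_filter, mem_range]; omega
  rw [prod_filter, Fin.prod_univ_eq_prod_range (fun j => if j < k then f j else 1), ← prod_filter,
    hrange]

theorem prefixSum_eq_sum_range {n k : ℕ} {a : Fin n → ℝ} {A : ℕ → ℝ} (hA : ∀ i, a i = A i)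
    (hk : k ≤ n) : prefixSum a k = ∑ j ∈ range k, A j := by
  rw [prefixSum, sum_congr rfl fun i _ => hA i, sum_filter_val_lt hk]

theorem prefixProd_eq_prod_range {n k : ℕ} {c : Fin n → ℝ} {C : ℕ → ℝ} (hC : ∀ i, c i = C i)
    (hk : k ≤ n) : prefixProd c k = ∏ j ∈ range k, C j := by
  rw [prefixProd, prod_congr rfl fun i _ => hC i, prod_filter_val_lt hk]

theorem prefixProd_mul {n : ℕ} (c d : Fin n → ℝ) (m : ℕ) :
    prefixProd (fun i => c i * d i) m = prefixProd c m * prefixProd d m :=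
  prod_mul_distrib

theorem prefixProd_nonneg {n : ℕ} {c : Fin n → ℝ} (hc : ∀ i, 0 ≤ c i) (m : ℕ) :
    0 ≤ prefixProd c m :=
  prod_nonneg fun i _ => hc i

theorem antitone_prefixProd {n : ℕ} {c : Fin n → ℝ} (hc₀ : ∀ i, 0 ≤ c i) (hc₁ : ∀ i, c i ≤ 1) :
    Antitone (prefixProd c) := fun _ _ hkl =>
  prod_le_prod_of_subset_of_le_one (fun _ => by
    simp only [mem_filter]; exact And.imp_right fun h => h.trans_le hkl)
    (fun i _ => hc₀ i) fun i _ _ => hc₁ i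

theorem extend_val_of_lt {n : ℕ} (a : Fin n → ℝ) {j : ℕ} (hj : j < n) :
    Function.extend Fin.val a 0 j = a ⟨j, hj⟩ :=
  Fin.val_injective.extend_apply a 0 ⟨j, hj⟩

theorem Monotone.monotoneOn_extend_val {n : ℕ} {a : Fin n → ℝ} (ha : Monotone a) :
    MonotoneOn (Function.extend Fin.val a 0) (Set.Iio n) := fun i hi j hj hij => by
  rw [extend_val_of_lt a hi, extend_val_of_lt a hj]
  exact ha hij

theorem prefixProd_le_prefixProd_of_convexOn_log {S : Set ℝ} (hS : IsOpen S) {f : ℝ → ℝ}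
    (hf : ∀ x ∈ S, 0 < f x) (hfa : AntitoneOn f S) (hfc : ConvexOn ℝ S fun x => Real.log (f x))
    {n : ℕ} {a b : Fin n → ℝ} (ha : ∀ i, a i ∈ S) (hb : ∀ i, b i ∈ S)
    (ham : Monotone a) (hbm : Monotone b)
    (hab : ∀ k, 1 ≤ k → k ≤ n → prefixSum a k ≤ prefixSum b k) {m : ℕ} (hm : m ≤ n) :
    prefixProd (fun i => f (b i)) m ≤ prefixProd (fun i => f (a i)) m := by
  set A := Function.extend Fin.val a 0
  set B := Function.extend Fin.val b 0
  have hA : ∀ i, a i = A i := fun i => (extend_val_of_lt a i.isLt).symm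
  have hB : ∀ i, b i = B i := fun i => (extend_val_of_lt b i.isLt).symm
  rw [prefixProd_eq_prod_range (C := fun j => f (B j)) (fun i => congrArg f (hB i)) hm,
    prefixProd_eq_prod_range (C := fun j => f (A j)) (fun i => congrArg f (hA i)) hm]
  refine prod_range_le_prod_range_of_convexOn_log hS hf hfa hfc (fun i hi => ?_) (fun i hi => ?_)
    (ham.monotoneOn_extend_val.mono (Set.Iio_subset_Iio hm))
    (hbm.monotoneOn_extend_val.mono (Set.Iio_subset_Iio hm)) fun k hk => ?_
  · rw [show A i = a ⟨i, _⟩ from extend_val_of_lt a (hi.trans_le hm)]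
    exact ha _
  · rw [show B i = b ⟨i, _⟩ from extend_val_of_lt b (hi.trans_le hm)]
    exact hb _
  · rcases k.eq_zero_or_pos with rfl | hk₀
    · simp
    rw [← prefixSum_eq_sum_range hA (hk.trans hm), ← prefixSum_eq_sum_range hB (hk.trans hm)]
    exact hab k hk₀ (hk.trans hm)

theorem sum_Icc_mul_le_of_antitoneOn {n : ℕ} {P q₁ q₂ : ℕ → ℝ} (hP : AntitoneOn P (Set.Icc 1 n))
    (hsum : ∑ m ∈ Icc 1 n, q₁ m = ∑ m ∈ Icc 1 n, q₂ m)
    (htail : ∀ k, 1 ≤ k → k ≤ n → ∑ m ∈ Icc k n, q₁ m ≤ ∑ m ∈ Icc k n, q₂ m) :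
    ∑ m ∈ Icc 1 n, q₂ m * P m ≤ ∑ m ∈ Icc 1 n, q₁ m * P m := by
  have hIcc : ∀ k (f : ℕ → ℝ), ∑ m ∈ Icc (k + 1) n, f m = ∑ j ∈ Ico k n, f (j + 1) := by
    intro k f; rw [sum_Ico_add', Ico_add_one_right_eq_Icc]
  have hIcc_one : ∀ f : ℕ → ℝ, ∑ m ∈ Icc 1 n, f m = ∑ j ∈ range n, f (j + 1) := by
    intro f; rw [range_eq_Ico, ← hIcc]
  have hsplit : ∀ (f : ℕ → ℝ) k, k ≤ n →
      ∑ j ∈ range k, f (j + 1) + ∑ m ∈ Icc (k + 1) n, f m = ∑ m ∈ Icc 1 n, f m := by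
    intro f k hk; rw [hIcc, hIcc_one, sum_range_add_sum_Ico _ hk]
  have habel := sum_range_mul_nonneg_of_monotoneOn (m := n) (d := fun j => P n - P (j + 1))
    (e := fun j => q₂ (j + 1) - q₁ (j + 1)) ?_ ?_ ?_
  · rw [hIcc_one, hIcc_one] at hsum ⊢
    simp only [sub_mul, mul_sub, sum_sub_distrib, ← mul_sum, hsum] at habel
    simp only [mul_comm (q₁ _), mul_comm (q₂ _)]
    linarith
  · intro i hi j hj hij
    exact sub_le_sub_left
      (hP ⟨by omega, Set.mem_Iio.1 hi⟩ ⟨by omega, Set.mem_Iio.1 hj⟩ (by omega)) _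
  · intro i hi
    exact sub_nonpos.2 (hP ⟨by omega, by omega⟩ ⟨by omega, le_rfl⟩ (by omega))
  · intro k hk
    rw [sum_sub_distrib, sub_nonpos]
    rcases hk.lt_or_eq with hk | rfl
    · linarith [htail (k + 1) (by omega) hk, hsplit q₁ k hk.le, hsplit q₂ k hk.le]
    · rw [← hIcc_one, ← hIcc_one, hsum]

theorem stmt_2_general {n : ℕ} (s g : ℝ → ℝ)
    (hs_pos : ∀ a > 0, 0 < s a) (hs_le : ∀ a > 0, s a ≤ 1)
    (hs_anti : AntitoneOn s (Set.Ioi 0))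
    (hs_logconv : ConvexOn ℝ (Set.Ioi 0) (fun a => Real.log (s a)))
    (hg : ∀ t > 0, 0 < g t ∧ g t < 1)
    (hg_anti : AntitoneOn g (Set.Ioi 0))
    (hg_logconv : ConvexOn ℝ (Set.Ioi 0) (fun t => Real.log (g t)))
    (v u α β : Fin n → ℝ)
    (hv : ∀ i, 0 < v i) (hu : ∀ i, 0 < u i)
    (hα : ∀ i, 0 < α i) (hβ : ∀ i, 0 < β i)
    (hvm : Monotone v) (hum : Monotone u) (hαm : Monotone α) (hβm : Monotone β)
    (hmajα : ∀ k, 1 ≤ k → k ≤ n → prefixSum α k ≤ prefixSum β k)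
    (hmajv : ∀ k, 1 ≤ k → k ≤ n → prefixSum v k ≤ prefixSum u k)
    (q₁ q₂ : ℕ → ℝ)
    (hq₂ : ∀ m ∈ Finset.Icc 1 n, 0 ≤ q₂ m)
    (hq₁sum : ∑ m ∈ Finset.Icc 1 n, q₁ m = 1)
    (hq₂sum : ∑ m ∈ Finset.Icc 1 n, q₂ m = 1)
    (hst : ∀ k, 1 ≤ k → k ≤ n →
      ∑ m ∈ Finset.Icc k n, q₁ m ≤ ∑ m ∈ Finset.Icc k n, q₂ m) :
    ∑ m ∈ Finset.Icc 1 n, q₂ m * prefixProd (fun i => g (u i) * s (β i)) m ≤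
      ∑ m ∈ Finset.Icc 1 n, q₁ m * prefixProd (fun i => g (v i) * s (α i)) m := by
  have hprod : ∀ m ≤ n, prefixProd (fun i => g (u i) * s (β i)) m ≤
      prefixProd (fun i => g (v i) * s (α i)) m := by
    intro m hm
    rw [prefixProd_mul, prefixProd_mul]
    exact mul_le_mul
      (prefixProd_le_prefixProd_of_convexOn_log isOpen_Ioi (fun t ht => (hg t ht).1) hg_anti
        hg_logconv hv hu hvm hum hmajv hm)
      (prefixProd_le_prefixProd_of_convexOn_log isOpen_Ioi hs_pos hs_anti hs_logconv hα hβ hαm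
        hβm hmajα hm)
      (prefixProd_nonneg (fun i => (hs_pos _ (hβ i)).le) m)
      (prefixProd_nonneg (fun i => (hg _ (hv i)).1.le) m)
  have hanti : Antitone (prefixProd fun i => g (v i) * s (α i)) :=
    antitone_prefixProd (fun i => (mul_pos (hg _ (hv i)).1 (hs_pos _ (hα i))).le)
      fun i => mul_le_one₀ (hg _ (hv i)).2.le (hs_pos _ (hα i)).le (hs_le _ (hα i))
  calc _ ≤ ∑ m ∈ Icc 1 n, q₂ m * prefixProd (fun i => g (v i) * s (α i)) m :=
        sum_le_sum fun m hm => mul_le_mul_of_nonneg_left (hprod m (mem_Icc.1 hm).2) (hq₂ m hm)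
    _ ≤ _ := sum_Icc_mul_le_of_antitoneOn (hanti.antitoneOn _) (hq₁sum.trans hq₂sum.symm) hst

/-- Theorem 3.3: smallest claim amounts with random numbers of claims,
usual stochastic order. -/
theorem stmt_2 {n : ℕ} (hn : 1 ≤ n) (s g : ℝ → ℝ)
    (hs_pos : ∀ a > 0, 0 < s a) (hs_le : ∀ a > 0, s a ≤ 1)
    (hs_anti : AntitoneOn s (Set.Ioi 0))
    (hs_logconv : ConvexOn ℝ (Set.Ioi 0) (fun a => Real.log (s a)))
    (hg : ∀ t > 0, 0 < g t ∧ g t < 1)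
    (hg_anti : AntitoneOn g (Set.Ioi 0))
    (hg_logconv : ConvexOn ℝ (Set.Ioi 0) (fun t => Real.log (g t)))
    (v u α β : Fin n → ℝ)
    (hv : ∀ i, 0 < v i) (hu : ∀ i, 0 < u i)
    (hα : ∀ i, 0 < α i) (hβ : ∀ i, 0 < β i)
    (hvm : Monotone v) (hum : Monotone u) (hαm : Monotone α) (hβm : Monotone β)
    (hmajα : ∀ k, 1 ≤ k → k ≤ n → prefixSum α k ≤ prefixSum β k)
    (hmajv : ∀ k, 1 ≤ k → k ≤ n → prefixSum v k ≤ prefixSum u k)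
    (q₁ q₂ : ℕ → ℝ)
    (hq₁ : ∀ m ∈ Finset.Icc 1 n, 0 ≤ q₁ m) (hq₂ : ∀ m ∈ Finset.Icc 1 n, 0 ≤ q₂ m)
    (hq₁sum : ∑ m ∈ Finset.Icc 1 n, q₁ m = 1)
    (hq₂sum : ∑ m ∈ Finset.Icc 1 n, q₂ m = 1)
    (hst : ∀ k, 1 ≤ k → k ≤ n →
      ∑ m ∈ Finset.Icc k n, q₁ m ≤ ∑ m ∈ Finset.Icc k n, q₂ m) :
    ∑ m ∈ Finset.Icc 1 n, q₂ m * prefixProd (fun i => g (u i) * s (β i)) m ≤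
      ∑ m ∈ Finset.Icc 1 n, q₁ m * prefixProd (fun i => g (v i) * s (α i)) m :=
  stmt_2_general s g hs_pos hs_le hs_anti hs_logconv hg hg_anti hg_logconv v u α β hv hu hα hβ hvm
    hum hαm hβm hmajα hmajv q₁ q₂ hq₂ hq₁sum hq₂sum hst
end

section
/- Let n ≥ 1. Let s : ℝ → ℝ satisfy: 0 < s(a) ≤ 1 for every a > 0, s is antitone on (0,∞), and s is convex on (0,∞). Let g : ℝ → ℝ satisfy: 0 < g(t) < 1 for every t > 0, g antitone on (0,∞) and convex on (0,∞). Let v, u, α, β : Fin n → ℝ be positive tuples with (v i − v j)·(α i − α j) ≥ 0 and (u i − u j)·(β i − β j) ≥ 0 for all i, j. Suppose α is weakly supermajorized by β and v is weakly supermajorized by u, i.e. for every k = 1,…,n the sum of the k smallest entries of α (respectively v) is at most the sum of the k smallest entries of β (respectively u). Then ∏_{i=1}^n (1 − g(v i)·s(α i)) ≤ ∏_{i=1}^n (1 − g(u i)·s(β i)). -/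
/-!
Taking logarithms, it suffices to compare `∑ i, log (1 - g (v i) * s (α i))` with the same sum
for `(u, β)`. Since `(α, v)` and `(β, u)` are similarly ordered, each pair can be sorted by a single
permutation; then one coordinate is moved at a time, first `α` to `β` with `v` fixed, then `v` to
`u` with `β` fixed. Each move is an inequality `∑ i, f i (x i) ≤ ∑ i, f i (y i)` for
`f i p = log (1 - c i * F p)` with `F ∈ {s, g}` convex and decreasing and `c i` decreasing in `i`:
these `f i` are concave and increasing, with increments decreasing in `i`. For such `f i`,
`f i (y i) - f i (x i) ≥ t i * (y i - x i)` for chord slopes `t i ≥ 0` decreasing in `i`, and Abel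
summation against the nonnegative partial sums of `y - x` concludes.
-/

open Finset Filter Topology

theorem ConcaveOn.slope_le_slope {𝕜 : Type*} [Field 𝕜] [LinearOrder 𝕜] [IsStrictOrderedRing 𝕜]
    {s : Set 𝕜} {f : 𝕜 → 𝕜} (hf : ConcaveOn 𝕜 s f) {a b p q : 𝕜} (ha : a ∈ s) (hb : b ∈ s)
    (hp : p ∈ s) (hq : q ∈ s) (hab : a < b) (hpq : p < q) (hap : a ≤ p) (hbq : b ≤ q) :
    slope f p q ≤ slope f a b := by
  have haq : a < q := hab.trans_le hbq
  calc slope f p q = slope f q p := slope_comm f p q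
    _ ≤ slope f q a := hf.slope_anti hq ⟨ha, haq.ne⟩ ⟨hp, hpq.ne⟩ hap
    _ = slope f a q := slope_comm f q a
    _ ≤ slope f a b := hf.slope_anti ha ⟨hb, hab.ne'⟩ ⟨hq, haq.ne'⟩ hbq

theorem ConcaveOn.slope_mul_sub_le_sub {s : Set ℝ} {f : ℝ → ℝ} (hf : ConcaveOn ℝ s f)
    {x y z : ℝ} (hx : x ∈ s) (hy : y ∈ s) (hz : z ∈ s) (hyz : y < z) (hzx : y < x → z ≤ x) :
    slope f y z * (y - x) ≤ f y - f x := by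
  rcases lt_trichotomy x y with hxy | rfl | hxy
  · have h := hf.slope_le_slope hx hy hy hz hxy hyz hxy.le hyz.le
    have e : (y - x) * slope f x y = f y - f x := sub_smul_slope f x y
    nlinarith
  · simp
  · have h := hf.slope_le_slope hy hz hy hx hyz hxy le_rfl (hzx hxy)
    have e : (x - y) * slope f y x = f x - f y := sub_smul_slope f y x
    nlinarith

theorem mul_sum_le_sum_mul_of_antitoneOn {ι R : Type*} [LinearOrder ι] [CommRing R]
    [LinearOrder R] [IsOrderedRing R] {s : Finset ι} {t d : ι → R} (ht : AntitoneOn t s)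
    (hd : ∀ k ∈ s, 0 ≤ ∑ i ∈ s with i ≤ k, d i) {c : R} (hc : ∀ i ∈ s, c ≤ t i) :
    c * ∑ i ∈ s, d i ≤ ∑ i ∈ s, t i * d i := by
  classical
  induction s using Finset.induction_on_max generalizing c with
  | empty => simp
  | insert m s hlt ih =>
    have hm : m ∉ s := fun h => (hlt m h).false
    have hpartial : ∀ k ∈ s, ∑ i ∈ insert m s with i ≤ k, d i = ∑ i ∈ s with i ≤ k, d i :=
      fun k hk => by rw [filter_insert, if_neg (hlt k hk).not_ge]
    have htotal : 0 ≤ d m + ∑ i ∈ s, d i := by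
      have h := hd m (mem_insert_self m s)
      rwa [filter_true_of_mem fun i hi => ?_, sum_insert hm] at h
      rcases mem_insert.1 hi with rfl | hi
      exacts [le_rfl, (hlt i hi).le]
    have ih' : t m * ∑ i ∈ s, d i ≤ ∑ i ∈ s, t i * d i :=
      ih (ht.mono (by simp)) (fun k hk => hpartial k hk ▸ hd k (mem_insert_of_mem hk))
        fun i hi => ht (mem_insert_of_mem hi) (mem_insert_self m s) (hlt i hi).le
    rw [sum_insert hm, sum_insert hm]
    calc c * (d m + ∑ i ∈ s, d i) ≤ t m * (d m + ∑ i ∈ s, d i) :=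
          mul_le_mul_of_nonneg_right (hc m (mem_insert_self m s)) htotal
      _ = t m * d m + t m * ∑ i ∈ s, d i := mul_add _ _ _
      _ ≤ t m * d m + ∑ i ∈ s, t i * d i := add_le_add_right ih' _

theorem exists_pos_forall_add_mem_and_le {ι : Type*} [Finite ι] {s : Set ℝ} {x y : ι → ℝ}
    (hs : IsOpen s) (hy : ∀ i, y i ∈ s) :
    ∃ δ > 0, (∀ i, y i + δ ∈ s) ∧ ∀ i, y i < x i → δ ≤ x i - y i := by
  have hmem : ∀ i, ∀ᶠ δ in 𝓝 (0 : ℝ), y i + δ ∈ s := fun i =>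
    (continuous_const_add (y i)).continuousAt.preimage_mem_nhds (by simpa using hs.mem_nhds (hy i))
  have hle : ∀ i, ∀ᶠ δ in 𝓝 (0 : ℝ), y i < x i → δ ≤ x i - y i := fun i => by
    by_cases h : y i < x i
    · filter_upwards [eventually_le_nhds (sub_pos.2 h)] with δ hδ using fun _ => hδ
    · exact .of_forall fun _ h' => absurd h' h
  have hev : ∀ᶠ δ in 𝓝[>] (0 : ℝ),
      0 < δ ∧ (∀ i, y i + δ ∈ s) ∧ ∀ i, y i < x i → δ ≤ x i - y i :=
    (eventually_mem_nhdsWithin (s := Set.Ioi 0)).and <| nhdsWithin_le_nhds <|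
      (eventually_all.2 hmem).and (eventually_all.2 hle)
  exact hev.exists

section WeakSupermajorization

variable {ι : Type*} [LinearOrder ι] {s : Set ℝ} {f : ι → ℝ → ℝ} {x y : ι → ℝ}

theorem exists_antitone_nonneg_chord_bounds [Finite ι] (hs : IsOpen s) (hx : ∀ i, x i ∈ s)
    (hy : ∀ i, y i ∈ s) (hy_mono : Monotone y) (hf_conc : ∀ i, ConcaveOn ℝ s (f i))
    (hf_mono : ∀ i, MonotoneOn (f i) s) (hf_sub : ∀ i j, i ≤ j → MonotoneOn (f i - f j) s) :
    ∃ t : ι → ℝ, Antitone t ∧ (∀ i, 0 ≤ t i) ∧ ∀ i, t i * (y i - x i) ≤ f i (y i) - f i (x i) := by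
  -- A step `δ` common to all `i` makes the slopes over `[y i, y i + δ]` antitone in `i`;
  -- `δ ≤ x i - y i` gives the chord bound when `y i < x i`.
  obtain ⟨δ, hδ, hδs, hδx⟩ := exists_pos_forall_add_mem_and_le (x := x) hs hy
  have hyδ : ∀ i, y i < y i + δ := fun i => lt_add_of_pos_right _ hδ
  refine ⟨fun i => slope (f i) (y i) (y i + δ), fun i j hij => ?_,
    fun i => (hf_mono i).slope_nonneg (hy i) (hδs i),
    fun i => (hf_conc i).slope_mul_sub_le_sub (hx i) (hy i) (hδs i) (hyδ i)
      fun h => by linarith [hδx i h]⟩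
  have hsub : slope (f j) (y j) (y j + δ) ≤ slope (f i) (y j) (y j + δ) := by
    have h := (hf_sub i j hij).slope_nonneg (hy j) (hδs j)
    simp only [slope_def_field, Pi.sub_apply] at h ⊢
    rwa [← sub_nonneg, ← sub_div, sub_sub_sub_comm]
  exact hsub.trans <| (hf_conc i).slope_le_slope (hy i) (hδs i) (hy j) (hδs j) (hyδ i) (hyδ j)
    (hy_mono hij) (by linarith [hy_mono hij])

theorem sum_le_sum_of_weakSupermajorized [Fintype ι] (hs : IsOpen s) (hx : ∀ i, x i ∈ s)
    (hy : ∀ i, y i ∈ s) (hy_mono : Monotone y) (hf_conc : ∀ i, ConcaveOn ℝ s (f i))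
    (hf_mono : ∀ i, MonotoneOn (f i) s) (hf_sub : ∀ i j, i ≤ j → MonotoneOn (f i - f j) s)
    (hxy : ∀ k, ∑ i with i ≤ k, x i ≤ ∑ i with i ≤ k, y i) :
    ∑ i, f i (x i) ≤ ∑ i, f i (y i) := by
  obtain ⟨t, ht_anti, ht_nonneg, ht⟩ :=
    exists_antitone_nonneg_chord_bounds hs hx hy hy_mono hf_conc hf_mono hf_sub
  have habel : 0 ≤ ∑ i, t i * (y i - x i) := by
    simpa using mul_sum_le_sum_mul_of_antitoneOn (s := univ) (d := fun i => y i - x i)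
      (ht_anti.antitoneOn _) (fun k _ => by simpa [sum_sub_distrib] using hxy k)
      (fun i _ => ht_nonneg i)
  rw [← sub_nonneg, ← sum_sub_distrib]
  exact habel.trans (sum_le_sum fun i _ => ht i)

end WeakSupermajorization

section LogOneSubMul

open Real

variable {s : Set ℝ} {F : ℝ → ℝ} {c : ℝ}

theorem monotoneOn_log_one_sub_mul (hF : AntitoneOn F s) (hc : 0 ≤ c)
    (hcF : ∀ p ∈ s, c * F p < 1) : MonotoneOn (fun p => log (1 - c * F p)) s :=
  fun p hp _ hq hpq => log_le_log (sub_pos.2 (hcF p hp)) <|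
    sub_le_sub_left (mul_le_mul_of_nonneg_left (hF hp hq hpq) hc) 1

theorem concaveOn_log_one_sub_mul (hF : ConvexOn ℝ s F) (hc : 0 ≤ c)
    (hcF : ∀ p ∈ s, c * F p < 1) : ConcaveOn ℝ s (fun p => log (1 - c * F p)) := by
  refine ⟨hF.1, fun p hp q hq a b ha hb hab => ?_⟩
  have hp' : 0 < 1 - c * F p := sub_pos.2 (hcF p hp)
  have hq' : 0 < 1 - c * F q := sub_pos.2 (hcF q hq)
  have hmix : 0 < a • (1 - c * F p) + b • (1 - c * F q) :=
    convex_Ioi (0 : ℝ) hp' hq' ha hb hab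
  have hconv : c * F (a • p + b • q) ≤ a * (c * F p) + b * (c * F q) := by
    have := mul_le_mul_of_nonneg_left (hF.2 hp hq ha hb hab) hc
    simp only [smul_eq_mul] at this ⊢
    linarith
  calc a • log (1 - c * F p) + b • log (1 - c * F q)
      ≤ log (a • (1 - c * F p) + b • (1 - c * F q)) :=
        strictConcaveOn_log_Ioi.concaveOn.2 hp' hq' ha hb hab
    _ ≤ log (1 - c * F (a • p + b • q)) := by
        refine log_le_log hmix ?_
        simp only [smul_eq_mul] at hmix hconv ⊢
        linarith

theorem monotoneOn_log_one_sub_mul_sub_log_one_sub_mul (hF : AntitoneOn F s)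
    (hF_nonneg : ∀ p ∈ s, 0 ≤ F p) {c' : ℝ} (hc' : c' ≤ c) (hcF : ∀ p ∈ s, c * F p < 1) :
    MonotoneOn (fun p => log (1 - c * F p) - log (1 - c' * F p)) s := by
  intro p hp q hq hpq
  have hc'F : ∀ r ∈ s, c' * F r < 1 := fun r hr =>
    (mul_le_mul_of_nonneg_right hc' (hF_nonneg r hr)).trans_lt (hcF r hr)
  have h1 := sub_pos.2 (hcF p hp)
  have h2 := sub_pos.2 (hcF q hq)
  have h3 := sub_pos.2 (hc'F p hp)
  have h4 := sub_pos.2 (hc'F q hq)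
  have hcross : (1 - c * F p) * (1 - c' * F q) ≤ (1 - c * F q) * (1 - c' * F p) := by
    nlinarith [hF hp hq hpq]
  dsimp only
  rw [sub_le_sub_iff, ← log_mul h1.ne' h4.ne', ← log_mul h2.ne' h3.ne']
  exact log_le_log (mul_pos h1 h4) hcross

end LogOneSubMul

theorem Monovary.exists_perm_monotone {n : ℕ} {α β : Type*} [LinearOrder α] [LinearOrder β]
    {f : Fin n → α} {g : Fin n → β} (h : Monovary g f) :
    ∃ σ : Equiv.Perm (Fin n), Monotone (f ∘ σ) ∧ Monotone (g ∘ σ) := by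
  let σ := Tuple.sort fun i => toLex (f i, g i)
  have hσ : ∀ ⦃i j⦄, i ≤ j → f (σ i) < f (σ j) ∨ f (σ i) = f (σ j) ∧ g (σ i) ≤ g (σ j) :=
    fun i j hij => Prod.Lex.le_iff.1 (Tuple.monotone_sort (fun i => toLex (f i, g i)) hij)
  refine ⟨σ, fun i j hij => ?_, fun i j hij => ?_⟩
  · rcases hσ hij with hlt | ⟨heq, -⟩
    exacts [hlt.le, heq.le]
  · rcases hσ hij with hlt | ⟨-, hle⟩
    exacts [h hlt, hle]

theorem kSmallestSum_eq_of_monotone {n : ℕ} {a : Fin n → ℝ} {σ : Equiv.Perm (Fin n)}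
    (h : Monotone (a ∘ σ)) (k : ℕ) :
    kSmallestSum a k = ∑ i ∈ univ.filter (fun i : Fin n => (i : ℕ) < k), a (σ i) :=
  sum_congr rfl fun i _ => (congrFun (Tuple.comp_sort_eq_comp_iff_monotone.2 h) i).symm

theorem sum_filter_le_le_of_kSmallestSum_le {n : ℕ} {a b : Fin n → ℝ} {σ τ : Equiv.Perm (Fin n)}
    (hσ : Monotone (a ∘ σ)) (hτ : Monotone (b ∘ τ))
    (h : ∀ k, 1 ≤ k → k ≤ n → kSmallestSum a k ≤ kSmallestSum b k) (k : Fin n) :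
    ∑ i with i ≤ k, a (σ i) ≤ ∑ i with i ≤ k, b (τ i) := by
  have hk := h (k + 1) (Nat.le_add_left 1 k) k.isLt
  simpa only [kSmallestSum_eq_of_monotone hσ, kSmallestSum_eq_of_monotone hτ, Nat.lt_succ_iff,
    ← Fin.le_def] using hk

theorem sum_log_one_sub_mul_le {ι : Type*} [LinearOrder ι] [Fintype ι] {s : Set ℝ}
    (hs : IsOpen s) {F : ℝ → ℝ} {c x y : ι → ℝ} (hF_nonneg : ∀ p ∈ s, 0 ≤ F p)
    (hF_anti : AntitoneOn F s) (hF_conv : ConvexOn ℝ s F) (hc_nonneg : ∀ i, 0 ≤ c i)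
    (hc_anti : Antitone c) (hcF : ∀ i, ∀ p ∈ s, c i * F p < 1) (hx : ∀ i, x i ∈ s)
    (hy : ∀ i, y i ∈ s) (hy_mono : Monotone y)
    (hxy : ∀ k, ∑ i with i ≤ k, x i ≤ ∑ i with i ≤ k, y i) :
    ∑ i, Real.log (1 - c i * F (x i)) ≤ ∑ i, Real.log (1 - c i * F (y i)) :=
  sum_le_sum_of_weakSupermajorized (f := fun i p => Real.log (1 - c i * F p)) hs hx hy hy_mono
    (fun i => concaveOn_log_one_sub_mul hF_conv (hc_nonneg i) (hcF i))
    (fun i => monotoneOn_log_one_sub_mul hF_anti (hc_nonneg i) (hcF i))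
    (fun i _ hij => monotoneOn_log_one_sub_mul_sub_log_one_sub_mul hF_anti hF_nonneg
      (hc_anti hij) (hcF i))
    hxy

theorem prod_le_prod_of_sum_log_le {ι : Type*} {s : Finset ι} {a b : ι → ℝ}
    (ha : ∀ i ∈ s, 0 < a i) (hb : ∀ i ∈ s, 0 < b i)
    (h : ∑ i ∈ s, Real.log (a i) ≤ ∑ i ∈ s, Real.log (b i)) : ∏ i ∈ s, a i ≤ ∏ i ∈ s, b i := by
  rw [← Real.log_le_log_iff (prod_pos ha) (prod_pos hb), Real.log_prod fun i hi => (ha i hi).ne',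
    Real.log_prod fun i hi => (hb i hi).ne']
  exact h

theorem stmt_4_general {n : ℕ} (s g : ℝ → ℝ)
    (hs_pos : ∀ a > 0, 0 < s a) (hs_le : ∀ a > 0, s a ≤ 1)
    (hs_anti : AntitoneOn s (Set.Ioi 0))
    (hs_conv : ConvexOn ℝ (Set.Ioi 0) s)
    (hg : ∀ t > 0, 0 < g t ∧ g t < 1)
    (hg_anti : AntitoneOn g (Set.Ioi 0))
    (hg_conv : ConvexOn ℝ (Set.Ioi 0) g)
    (v u α β : Fin n → ℝ)
    (hv : ∀ i, 0 < v i) (hu : ∀ i, 0 < u i)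
    (hα : ∀ i, 0 < α i) (hβ : ∀ i, 0 < β i)
    (hsimv : ∀ i j, 0 ≤ (v i - v j) * (α i - α j))
    (hsimu : ∀ i j, 0 ≤ (u i - u j) * (β i - β j))
    (hmajα : ∀ k, 1 ≤ k → k ≤ n → kSmallestSum α k ≤ kSmallestSum β k)
    (hmajv : ∀ k, 1 ≤ k → k ≤ n → kSmallestSum v k ≤ kSmallestSum u k) :
    ∏ i, (1 - g (v i) * s (α i)) ≤ ∏ i, (1 - g (u i) * s (β i)) := by
  have hgs : ∀ p > 0, ∀ q > 0, g p * s q < 1 := fun p hp q hq =>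
    (mul_le_of_le_one_right (hg p hp).1.le (hs_le q hq)).trans_lt (hg p hp).2
  obtain ⟨σ, hασ, hvσ⟩ := Monovary.exists_perm_monotone
    (monovary_iff_forall_mul_nonneg.2 fun i j => hsimv j i)
  obtain ⟨τ, hβτ, huτ⟩ := Monovary.exists_perm_monotone
    (monovary_iff_forall_mul_nonneg.2 fun i j => hsimu j i)
  have hα_to_β : ∑ i, Real.log (1 - g (v (σ i)) * s (α (σ i)))
      ≤ ∑ i, Real.log (1 - g (v (σ i)) * s (β (τ i))) :=
    sum_log_one_sub_mul_le isOpen_Ioi (fun p hp => (hs_pos p hp).le) hs_anti hs_conv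
      (fun i => (hg _ (hv _)).1.le) (fun i j hij => hg_anti (hv _) (hv _) (hvσ hij))
      (fun i p hp => hgs _ (hv _) p hp) (fun i => hα _) (fun i => hβ _) hβτ
      (sum_filter_le_le_of_kSmallestSum_le hασ hβτ hmajα)
  have hv_to_u : ∑ i, Real.log (1 - s (β (τ i)) * g (v (σ i)))
      ≤ ∑ i, Real.log (1 - s (β (τ i)) * g (u (τ i))) :=
    sum_log_one_sub_mul_le isOpen_Ioi (fun p hp => (hg p hp).1.le) hg_anti hg_conv
      (fun i => (hs_pos _ (hβ _)).le) (fun i j hij => hs_anti (hβ _) (hβ _) (hβτ hij))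
      (fun i p hp => (mul_comm _ _).trans_lt (hgs p hp _ (hβ _))) (fun i => hv _) (fun i => hu _) huτ
      (sum_filter_le_le_of_kSmallestSum_le hvσ huτ hmajv)
  rw [← Equiv.prod_comp σ fun i => 1 - g (v i) * s (α i),
    ← Equiv.prod_comp τ fun i => 1 - g (u i) * s (β i)]
  refine prod_le_prod_of_sum_log_le (fun i _ => sub_pos.2 (hgs _ (hv _) _ (hα _)))
    (fun i _ => sub_pos.2 (hgs _ (hu _) _ (hβ _))) ?_
  simp only [mul_comm (s _)] at hv_to_u
  exact hα_to_β.trans hv_to_u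

/-- Theorem 3.4: largest claim amounts, fixed number of claims,
usual stochastic order under row weak majorization. -/
theorem stmt_4 {n : ℕ} (hn : 1 ≤ n) (s g : ℝ → ℝ)
    (hs_pos : ∀ a > 0, 0 < s a) (hs_le : ∀ a > 0, s a ≤ 1)
    (hs_anti : AntitoneOn s (Set.Ioi 0))
    (hs_conv : ConvexOn ℝ (Set.Ioi 0) s)
    (hg : ∀ t > 0, 0 < g t ∧ g t < 1)
    (hg_anti : AntitoneOn g (Set.Ioi 0))
    (hg_conv : ConvexOn ℝ (Set.Ioi 0) g)
    (v u α β : Fin n → ℝ)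
    (hv : ∀ i, 0 < v i) (hu : ∀ i, 0 < u i)
    (hα : ∀ i, 0 < α i) (hβ : ∀ i, 0 < β i)
    (hsimv : ∀ i j, 0 ≤ (v i - v j) * (α i - α j))
    (hsimu : ∀ i j, 0 ≤ (u i - u j) * (β i - β j))
    (hmajα : ∀ k, 1 ≤ k → k ≤ n → kSmallestSum α k ≤ kSmallestSum β k)
    (hmajv : ∀ k, 1 ≤ k → k ≤ n → kSmallestSum v k ≤ kSmallestSum u k) :
    ∏ i, (1 - g (v i) * s (α i)) ≤ ∏ i, (1 - g (u i) * s (β i)) :=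
  stmt_4_general s g hs_pos hs_le hs_anti hs_conv hg hg_anti hg_conv v u α β hv hu hα hβ hsimv hsimu
    hmajα hmajv
end

section
/- Let n ≥ 1. Let s : ℝ → ℝ satisfy 0 < s(a) ≤ 1 for every a > 0, s antitone and convex on (0,∞). Let g : ℝ → ℝ satisfy 0 < g(t) < 1 for every t > 0, g antitone and convex on (0,∞). Let v, u, α, β : Fin n → ℝ be positive nondecreasing tuples such that for every k = 1,…,n: Σ_{i=1}^k α i ≤ Σ_{i=1}^k β i and Σ_{i=1}^k v i ≤ Σ_{i=1}^k u i. Let q₁, q₂ : {1,…,n} → ℝ be nonnegative with Σ_{m=1}^n q₁(m) = Σ_{m=1}^n q₂(m) = 1 and Σ_{m=k}^n q₂(m) ≤ Σ_{m=k}^n q₁(m) for every k. Then Σ_{m=1}^n q₁(m) · ∏_{i=1}^m (1 − g(v i)·s(α i)) ≤ Σ_{m=1}^n q₂(m) · ∏_{i=1}^m (1 − g(u i)·s(β i)). -/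
open Finset

/-!
Both parameter changes are instances of one comparison of prefix products
`∏_{i<m} (1 - c i * φ (x i))`, with `c` nonnegative and decreasing and `φ` decreasing and convex.
After taking logarithms this is `∑_{i<m} h_i (a i) ≤ ∑_{i<m} h_i (b i)` for the concave increasing
functions `h_i = log (1 - c i * φ)`, whose increments decrease in `i` because `c` does. Writing
`h_i (b i) - h_i (a i) = t_i * (b i - a i)` with secant slopes `t_i ≥ 0`, concavity makes `t`
decreasing, and Abel summation against the nonnegative partial sums of `b - a` gives the
inequality. Changing `α` to `β` (`c = g ∘ v`, `φ = s`) and then `v` to `u` (`c = s ∘ β`, `φ = g`)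
bounds every product; the bound decreases in `m`, and a second Abel summation, against the
nonnegative tails of `q₁ - q₂`, compares the two mixtures.
-/

section Prefix

variable {n : ℕ}

lemma filter_val_lt_succ {k : ℕ} (hk : k < n) :
    univ.filter (fun i : Fin n => (i : ℕ) < k + 1) =
      insert ⟨k, hk⟩ (univ.filter fun i : Fin n => (i : ℕ) < k) := by
  ext i
  simp only [mem_filter, mem_univ, true_and, mem_insert, Fin.ext_iff]
  omega

lemma filter_val_lt_succ_of_le {k : ℕ} (hk : n ≤ k) :
    univ.filter (fun i : Fin n => (i : ℕ) < k + 1) = univ.filter fun i : Fin n => (i : ℕ) < k := by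
  ext i
  simp only [mem_filter, mem_univ, true_and]
  omega

lemma prefixSum_succ (a : Fin n → ℝ) {k : ℕ} (hk : k < n) :
    prefixSum a (k + 1) = prefixSum a k + a ⟨k, hk⟩ := by
  rw [prefixSum, filter_val_lt_succ hk, sum_insert (by simp), add_comm, prefixSum]

lemma prefixSum_succ_of_le (a : Fin n → ℝ) {k : ℕ} (hk : n ≤ k) :
    prefixSum a (k + 1) = prefixSum a k := by
  rw [prefixSum, filter_val_lt_succ_of_le hk, prefixSum]

lemma prefixSum_sub (a b : Fin n → ℝ) (k : ℕ) :
    prefixSum (fun i => a i - b i) k = prefixSum a k - prefixSum b k :=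
  sum_sub_distrib ..

lemma prefixProd_pos {c : Fin n → ℝ} (hc : ∀ i, 0 < c i) (m : ℕ) : 0 < prefixProd c m :=
  prod_pos fun i _ => hc i

lemma log_prefixProd {c : Fin n → ℝ} (hc : ∀ i, 0 < c i) (m : ℕ) :
    Real.log (prefixProd c m) = prefixSum (fun i => Real.log (c i)) m :=
  Real.log_prod fun i _ => (hc i).ne'

lemma prefixProd_antitone {c : Fin n → ℝ} (h0 : ∀ i, 0 ≤ c i) (h1 : ∀ i, c i ≤ 1) :
    Antitone (prefixProd c) := fun _ _ hkm =>
  prod_anti_set_of_le_one h0 h1 fun i hi => by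
    simp only [mem_filter, mem_univ, true_and] at hi ⊢
    omega

/-- Abel summation, stated for any lower bound `τ` of the weights used so far so that it goes by
induction on `m`. -/
theorem mul_prefixSum_le_prefixSum_mul {t D : Fin n → ℝ} (ht : Antitone t)
    (hD : ∀ k, 1 ≤ k → k ≤ n → 0 ≤ prefixSum D k) (m : ℕ) {τ : ℝ}
    (hτ : ∀ i : Fin n, (i : ℕ) < m → τ ≤ t i) :
    τ * prefixSum D m ≤ prefixSum (fun i => t i * D i) m := by
  induction m generalizing τ with
  | zero => simp [prefixSum]
  | succ m ih =>
    rcases lt_or_ge m n with hm | hm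
    · have hlast : t ⟨m, hm⟩ * prefixSum D m ≤ prefixSum (fun i => t i * D i) m :=
        ih fun j hj => ht (Fin.le_def.2 hj.le)
      have hτm : τ * prefixSum D (m + 1) ≤ t ⟨m, hm⟩ * prefixSum D (m + 1) :=
        mul_le_mul_of_nonneg_right (hτ _ (Nat.lt_succ_self m)) (hD _ (by omega) hm)
      rw [prefixSum_succ D hm] at hτm
      rw [prefixSum_succ D hm, prefixSum_succ _ hm]
      linarith
    · rw [prefixSum_succ_of_le _ hm, prefixSum_succ_of_le _ hm]
      exact ih fun j hj => hτ j (by omega)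

end Prefix

lemma ConcaveOn.slope_le_slope_s5 {s : Set ℝ} {f : ℝ → ℝ} (hf : ConcaveOn ℝ s f)
    {x₁ y₁ x₂ y₂ : ℝ} (hx₁ : x₁ ∈ s) (hy₁ : y₁ ∈ s) (hx₂ : x₂ ∈ s) (hy₂ : y₂ ∈ s)
    (hx : x₁ ≤ x₂) (hy : y₁ ≤ y₂) (h₁ : x₁ < y₁) (h₂ : x₂ < y₂) :
    slope f x₂ y₂ ≤ slope f x₁ y₁ :=
  calc slope f x₂ y₂ = slope f y₂ x₂ := slope_comm ..
    _ ≤ slope f y₂ x₁ :=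
        hf.slope_anti hy₂ ⟨hx₁, (h₁.trans_le hy).ne⟩ ⟨hx₂, h₂.ne⟩ hx
    _ = slope f x₁ y₂ := slope_comm ..
    _ ≤ slope f x₁ y₁ :=
        hf.slope_anti hx₁ ⟨hy₁, h₁.ne'⟩ ⟨hy₂, (hx.trans_lt h₂).ne'⟩ hy

lemma exists_pos_forall_le {ι : Type*} [Finite ι] {f : ι → ℝ} (hf : ∀ i, 0 < f i) :
    ∃ ε > 0, ∀ i, ε ≤ f i := by
  cases isEmpty_or_nonempty ι
  · exact ⟨1, one_pos, isEmptyElim⟩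
  · obtain ⟨i, hi⟩ := Finite.exists_min f
    exact ⟨f i, hf i, hi⟩

section Slopes

variable {ι : Type*} [Preorder ι] [Finite ι] {h : ι → ℝ → ℝ} {a b : ι → ℝ}

/-- The slopes are taken over `[min (a i) (b i), max (a i) (b i)]`; where `a i = b i` this
interval is degenerate and is replaced by `[a i, a i + ε]`, with `ε` below every nondegenerate
gap, so that both endpoints stay monotone in `i`. -/
theorem exists_antitone_slopes (hconc : ∀ i, ConcaveOn ℝ (Set.Ioi 0) (h i))
    (hmono : ∀ i, MonotoneOn (h i) (Set.Ioi 0))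
    (hcross : ∀ i j, i ≤ j → ∀ x y, 0 < x → x < y → h j y - h j x ≤ h i y - h i x)
    (ha : ∀ i, 0 < a i) (hb : ∀ i, 0 < b i) (ham : Monotone a) (hbm : Monotone b) :
    ∃ t : ι → ℝ, Antitone t ∧ (∀ i, 0 ≤ t i) ∧ ∀ i, h i (b i) - h i (a i) = t i * (b i - a i) := by
  obtain ⟨ε, hε, hgap⟩ := exists_pos_forall_le (f := fun i => if a i = b i then 1 else |a i - b i|)
    fun i => by split_ifs with hi <;> simp [hi, sub_eq_zero]
  set lo : ι → ℝ := fun i => min (a i) (b i)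
  set hi : ι → ℝ := fun i => max (max (a i) (b i)) (lo i + ε)
  have hlo : ∀ i, 0 < lo i := fun i => lt_min (ha i) (hb i)
  have hlohi : ∀ i, lo i < hi i := fun i =>
    (lt_add_of_pos_right _ hε).trans_le (le_max_right _ _)
  have hlom : Monotone lo := ham.min hbm
  have hhim : Monotone hi := (ham.max hbm).max (hlom.add_const ε)
  have hhi : ∀ i, 0 < hi i := fun i => (hlo i).trans (hlohi i)
  refine ⟨fun i => slope (h i) (lo i) (hi i), fun i j hij => ?_, fun i => ?_, fun i => ?_⟩
  · calc slope (h j) (lo j) (hi j) ≤ slope (h i) (lo j) (hi j) := by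
          simp only [slope_def_field]
          exact div_le_div_of_nonneg_right (hcross i j hij _ _ (hlo j) (hlohi j))
            (sub_pos.2 (hlohi j)).le
      _ ≤ slope (h i) (lo i) (hi i) :=
          (hconc i).slope_le_slope_s5 (hlo i) (hhi i) (hlo j) (hhi j) (hlom hij) (hhim hij)
            (hlohi i) (hlohi j)
  · exact (hmono i).slope_nonneg (hlo i) (hhi i)
  · rcases eq_or_ne (a i) (b i) with hab | hab
    · simp [hab]
    have hgap_i : lo i + ε ≤ max (a i) (b i) := by
      have := hgap i
      simp only [hab, if_false] at this
      rcases le_total (a i) (b i) with hle | hle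
      · rw [abs_sub_comm, abs_of_nonneg (sub_nonneg.2 hle)] at this
        simp only [lo, min_eq_left hle, max_eq_right hle]
        linarith
      · rw [abs_of_nonneg (sub_nonneg.2 hle)] at this
        simp only [lo, min_eq_right hle, max_eq_left hle]
        linarith
    have hslope : slope (h i) (lo i) (hi i) = slope (h i) (a i) (b i) := by
      simp only [hi, max_eq_left hgap_i, lo]
      cases le_total (a i) (b i) <;> simp_all [slope_comm]
    dsimp only
    rw [hslope, mul_comm, ← smul_eq_mul, sub_smul_slope, vsub_eq_sub]

end Slopes

theorem prefixSum_comp_le_of_prefixSum_le {n : ℕ} {h : Fin n → ℝ → ℝ} {a b : Fin n → ℝ}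
    (hconc : ∀ i, ConcaveOn ℝ (Set.Ioi 0) (h i))
    (hmono : ∀ i, MonotoneOn (h i) (Set.Ioi 0))
    (hcross : ∀ i j, i ≤ j → ∀ x y, 0 < x → x < y → h j y - h j x ≤ h i y - h i x)
    (ha : ∀ i, 0 < a i) (hb : ∀ i, 0 < b i) (ham : Monotone a) (hbm : Monotone b)
    (hmaj : ∀ k, 1 ≤ k → k ≤ n → prefixSum a k ≤ prefixSum b k) (m : ℕ) :
    prefixSum (fun i => h i (a i)) m ≤ prefixSum (fun i => h i (b i)) m := by
  obtain ⟨t, ht, ht0, hslope⟩ := exists_antitone_slopes hconc hmono hcross ha hb ham hbm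
  have habel := mul_prefixSum_le_prefixSum_mul ht (D := fun i => b i - a i)
    (fun k hk hkn => by rw [prefixSum_sub]; linarith [hmaj k hk hkn]) m
    (τ := 0) fun i _ => ht0 i
  simp only [zero_mul, ← hslope, prefixSum_sub] at habel
  linarith

lemma concaveOn_log_one_sub_mul_s5 {φ : ℝ → ℝ} {c : ℝ} (hc : 0 ≤ c)
    (hφ : ConvexOn ℝ (Set.Ioi 0) φ) (hlt : ∀ x > 0, c * φ x < 1) :
    ConcaveOn ℝ (Set.Ioi 0) fun x => Real.log (1 - c * φ x) := by
  refine ⟨convex_Ioi 0, fun x hx y hy p q hp hq hpq => ?_⟩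
  have hxy : p • x + q • y ∈ Set.Ioi (0 : ℝ) := convex_Ioi 0 hx hy hp hq hpq
  have hφxy := mul_le_mul_of_nonneg_left (hφ.2 hx hy hp hq hpq) hc
  have hx' : 1 - c * φ x ∈ Set.Ioi (0 : ℝ) := by simpa using hlt x hx
  have hy' : 1 - c * φ y ∈ Set.Ioi (0 : ℝ) := by simpa using hlt y hy
  simp only [smul_eq_mul] at hxy hφxy ⊢
  calc p * Real.log (1 - c * φ x) + q * Real.log (1 - c * φ y)
      ≤ Real.log (p * (1 - c * φ x) + q * (1 - c * φ y)) :=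
        strictConcaveOn_log_Ioi.concaveOn.2 hx' hy' hp hq hpq
    _ ≤ Real.log (1 - c * φ (p * x + q * y)) :=
        Real.log_le_log (convex_Ioi 0 hx' hy' hp hq hpq) (by nlinarith)

lemma monotoneOn_log_one_sub_mul_s5 {φ : ℝ → ℝ} {c : ℝ} (hc : 0 ≤ c)
    (hφ : AntitoneOn φ (Set.Ioi 0)) (hlt : ∀ x > 0, c * φ x < 1) :
    MonotoneOn (fun x => Real.log (1 - c * φ x)) (Set.Ioi 0) := fun x hx y hy hxy =>
  Real.log_le_log (by linarith [hlt x hx])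
    (by linarith [mul_le_mul_of_nonneg_left (hφ hx hy hxy) hc])

lemma log_one_sub_mul_sub_le {c c' p q : ℝ} (hc : c' ≤ c) (hpq : q ≤ p)
    (h₁ : c * p < 1) (h₂ : c * q < 1) (h₃ : c' * p < 1) (h₄ : c' * q < 1) :
    Real.log (1 - c' * q) - Real.log (1 - c' * p) ≤
      Real.log (1 - c * q) - Real.log (1 - c * p) := by
  have hcross : (1 - c' * q) * (1 - c * p) ≤ (1 - c * q) * (1 - c' * p) := by
    nlinarith [mul_nonneg (sub_nonneg.2 hc) (sub_nonneg.2 hpq)]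
  have := Real.log_le_log (by nlinarith) hcross
  rw [Real.log_mul (by linarith) (by linarith), Real.log_mul (by linarith) (by linarith)] at this
  linarith

theorem prefixProd_one_sub_mul_le {n : ℕ} {φ : ℝ → ℝ} (hφanti : AntitoneOn φ (Set.Ioi 0))
    (hφconv : ConvexOn ℝ (Set.Ioi 0) φ) {c a b : Fin n → ℝ} (hc : ∀ i, 0 ≤ c i)
    (hca : Antitone c) (hlt : ∀ i, ∀ x > 0, c i * φ x < 1)
    (ha : ∀ i, 0 < a i) (hb : ∀ i, 0 < b i) (ham : Monotone a) (hbm : Monotone b)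
    (hmaj : ∀ k, 1 ≤ k → k ≤ n → prefixSum a k ≤ prefixSum b k) (m : ℕ) :
    prefixProd (fun i => 1 - c i * φ (a i)) m ≤ prefixProd (fun i => 1 - c i * φ (b i)) m := by
  have hpos : ∀ {x : Fin n → ℝ}, (∀ i, 0 < x i) → ∀ i, 0 < 1 - c i * φ (x i) :=
    fun hx i => by linarith [hlt i _ (hx i)]
  rw [← Real.log_le_log_iff (prefixProd_pos (hpos ha) m) (prefixProd_pos (hpos hb) m),
    log_prefixProd (hpos ha), log_prefixProd (hpos hb)]
  exact prefixSum_comp_le_of_prefixSum_le (h := fun i x => Real.log (1 - c i * φ x))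
    (fun i => concaveOn_log_one_sub_mul_s5 (hc i) hφconv (hlt i))
    (fun i => monotoneOn_log_one_sub_mul_s5 (hc i) hφanti (hlt i))
    (fun i j hij x y hx hxy => log_one_sub_mul_sub_le (hca hij) (hφanti hx (hx.trans hxy) hxy.le)
      (hlt i x hx) (hlt i y (hx.trans hxy)) (hlt j x hx) (hlt j y (hx.trans hxy)))
    ha hb ham hbm hmaj m

lemma sum_Icc_mul_le_of_tail_nonneg {n : ℕ} {r f : ℕ → ℝ} (hf : Antitone f)
    (hr : ∀ k, 1 ≤ k → k ≤ n → 0 ≤ ∑ m ∈ Icc k n, r m) {k : ℕ} (hk : k ≤ n) :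
    ∑ m ∈ Icc k n, r m * f m ≤ (∑ m ∈ Icc k n, r m) * f k := by
  induction hk using Nat.decreasingInduction with
  | self => simp
  | of_succ k hkn ih =>
    rw [← insert_Icc_succ_left_eq_Icc hkn.le, Order.succ_eq_add_one, sum_insert (by simp),
      sum_insert (by simp), add_mul]
    have := mul_le_mul_of_nonneg_left (hf k.le_succ) (hr (k + 1) (by omega) hkn)
    linarith

theorem sum_Icc_mul_le_of_tail_le {n : ℕ} (hn : 1 ≤ n) {q₁ q₂ f : ℕ → ℝ} (hf : Antitone f)
    (hsum : ∑ m ∈ Icc 1 n, q₁ m = ∑ m ∈ Icc 1 n, q₂ m)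
    (htail : ∀ k, 1 ≤ k → k ≤ n → ∑ m ∈ Icc k n, q₂ m ≤ ∑ m ∈ Icc k n, q₁ m) :
    ∑ m ∈ Icc 1 n, q₁ m * f m ≤ ∑ m ∈ Icc 1 n, q₂ m * f m := by
  have := sum_Icc_mul_le_of_tail_nonneg (r := fun m => q₁ m - q₂ m) hf
    (fun k hk hkn => by rw [sum_sub_distrib]; linarith [htail k hk hkn]) hn
  simp only [sub_mul, sum_sub_distrib, hsum, sub_self, zero_mul] at this
  linarith

theorem stmt_5_general {n : ℕ} (hn : 1 ≤ n) (s g : ℝ → ℝ)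
    (hs_pos : ∀ a > 0, 0 < s a) (hs_le : ∀ a > 0, s a ≤ 1)
    (hs_anti : AntitoneOn s (Set.Ioi 0))
    (hs_conv : ConvexOn ℝ (Set.Ioi 0) s)
    (hg : ∀ t > 0, 0 < g t ∧ g t < 1)
    (hg_anti : AntitoneOn g (Set.Ioi 0))
    (hg_conv : ConvexOn ℝ (Set.Ioi 0) g)
    (v u α β : Fin n → ℝ)
    (hv : ∀ i, 0 < v i) (hu : ∀ i, 0 < u i)
    (hα : ∀ i, 0 < α i) (hβ : ∀ i, 0 < β i)
    (hvm : Monotone v) (hum : Monotone u) (hαm : Monotone α) (hβm : Monotone β)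
    (hmajα : ∀ k, 1 ≤ k → k ≤ n → prefixSum α k ≤ prefixSum β k)
    (hmajv : ∀ k, 1 ≤ k → k ≤ n → prefixSum v k ≤ prefixSum u k)
    (q₁ q₂ : ℕ → ℝ)
    (hq₁ : ∀ m ∈ Finset.Icc 1 n, 0 ≤ q₁ m)
    (hq₁sum : ∑ m ∈ Finset.Icc 1 n, q₁ m = 1)
    (hq₂sum : ∑ m ∈ Finset.Icc 1 n, q₂ m = 1)
    (hst : ∀ k, 1 ≤ k → k ≤ n →
      ∑ m ∈ Finset.Icc k n, q₂ m ≤ ∑ m ∈ Finset.Icc k n, q₁ m) :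
    ∑ m ∈ Finset.Icc 1 n, q₁ m * prefixProd (fun i => 1 - g (v i) * s (α i)) m ≤
      ∑ m ∈ Finset.Icc 1 n, q₂ m * prefixProd (fun i => 1 - g (u i) * s (β i)) m := by
  have hgs : ∀ t > 0, ∀ a > 0, g t * s a < 1 := fun t ht a ha =>
    (mul_le_of_le_one_right (hg t ht).1.le (hs_le a ha)).trans_lt (hg t ht).2
  have hseverity : ∀ m, prefixProd (fun i => 1 - g (v i) * s (α i)) m ≤
      prefixProd (fun i => 1 - g (v i) * s (β i)) m :=
    prefixProd_one_sub_mul_le hs_anti hs_conv (fun i => (hg _ (hv i)).1.le)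
      (fun i j hij => hg_anti (hv i) (hv j) (hvm hij)) (fun i => hgs _ (hv i)) hα hβ hαm hβm hmajα
  have hoccurrence : ∀ m, prefixProd (fun i => 1 - g (v i) * s (β i)) m ≤
      prefixProd (fun i => 1 - g (u i) * s (β i)) m := by
    simpa only [mul_comm (g _)] using prefixProd_one_sub_mul_le hg_anti hg_conv
      (fun i => (hs_pos _ (hβ i)).le) (fun i j hij => hs_anti (hβ i) (hβ j) (hβm hij))
      (fun i x hx => by rw [mul_comm]; exact hgs x hx _ (hβ i)) hv hu hvm hum hmajv
  have hanti : Antitone (prefixProd fun i => 1 - g (u i) * s (β i)) :=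
    prefixProd_antitone (fun i => by linarith [hgs _ (hu i) _ (hβ i)])
      (fun i => by nlinarith [(hg _ (hu i)).1, hs_pos _ (hβ i)])
  calc ∑ m ∈ Icc 1 n, q₁ m * prefixProd (fun i => 1 - g (v i) * s (α i)) m
      ≤ ∑ m ∈ Icc 1 n, q₁ m * prefixProd (fun i => 1 - g (u i) * s (β i)) m :=
        sum_le_sum fun m hm =>
          mul_le_mul_of_nonneg_left ((hseverity m).trans (hoccurrence m)) (hq₁ m hm)
    _ ≤ _ := sum_Icc_mul_le_of_tail_le hn hanti (hq₁sum.trans hq₂sum.symm) hst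

/-- Theorem 3.5 (corrected): largest claim amounts with random numbers of
claims, usual stochastic order. -/
theorem stmt_5 {n : ℕ} (hn : 1 ≤ n) (s g : ℝ → ℝ)
    (hs_pos : ∀ a > 0, 0 < s a) (hs_le : ∀ a > 0, s a ≤ 1)
    (hs_anti : AntitoneOn s (Set.Ioi 0))
    (hs_conv : ConvexOn ℝ (Set.Ioi 0) s)
    (hg : ∀ t > 0, 0 < g t ∧ g t < 1)
    (hg_anti : AntitoneOn g (Set.Ioi 0))
    (hg_conv : ConvexOn ℝ (Set.Ioi 0) g)
    (v u α β : Fin n → ℝ)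
    (hv : ∀ i, 0 < v i) (hu : ∀ i, 0 < u i)
    (hα : ∀ i, 0 < α i) (hβ : ∀ i, 0 < β i)
    (hvm : Monotone v) (hum : Monotone u) (hαm : Monotone α) (hβm : Monotone β)
    (hmajα : ∀ k, 1 ≤ k → k ≤ n → prefixSum α k ≤ prefixSum β k)
    (hmajv : ∀ k, 1 ≤ k → k ≤ n → prefixSum v k ≤ prefixSum u k)
    (q₁ q₂ : ℕ → ℝ)
    (hq₁ : ∀ m ∈ Finset.Icc 1 n, 0 ≤ q₁ m) (hq₂ : ∀ m ∈ Finset.Icc 1 n, 0 ≤ q₂ m)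
    (hq₁sum : ∑ m ∈ Finset.Icc 1 n, q₁ m = 1)
    (hq₂sum : ∑ m ∈ Finset.Icc 1 n, q₂ m = 1)
    (hst : ∀ k, 1 ≤ k → k ≤ n →
      ∑ m ∈ Finset.Icc k n, q₂ m ≤ ∑ m ∈ Finset.Icc k n, q₁ m) :
    ∑ m ∈ Finset.Icc 1 n, q₁ m * prefixProd (fun i => 1 - g (v i) * s (α i)) m ≤
      ∑ m ∈ Finset.Icc 1 n, q₂ m * prefixProd (fun i => 1 - g (u i) * s (β i)) m :=
  stmt_5_general hn s g hs_pos hs_le hs_anti hs_conv hg hg_anti hg_conv v u α β hv hu hα hβ hvm hum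
    hαm hβm hmajα hmajv q₁ q₂ hq₁ hq₁sum hq₂sum hst
end

section
/- Let n ≥ 1, γ > 0, and let G : ℝ → ℝ satisfy 0 ≤ G(x) < 1 for all x. Let g : ℝ → ℝ satisfy 0 < g(t) < 1 for every t > 0, g antitone and convex on (0,∞). Let v, u, α, β : Fin n → ℝ be positive nondecreasing tuples such that for every k = 1,…,n: Σ_{i=1}^k α i ≤ Σ_{i=1}^k β i and Σ_{i=1}^k v i ≤ Σ_{i=1}^k u i. Let q₁, q₂ : {1,…,n} → ℝ be nonnegative with Σ_{m=1}^n q₁(m) = Σ_{m=1}^n q₂(m) = 1 and Σ_{m=k}^n q₂(m) ≤ Σ_{m=k}^n q₁(m) for every k. Then for every x ∈ ℝ: Σ_{m=1}^n q₁(m) · ∏_{i=1}^m (1 − g(v i)·(1 − G(x)^γ)^{α i}) ≤ Σ_{m=1}^n q₂(m) · ∏_{i=1}^m (1 − g(u i)·(1 − G(x)^γ)^{β i}). -/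
open Finset

/-- Abel-summation type inequality. -/
lemma abel_aux : ∀ (N : ℕ) (d w : ℕ → ℝ),
    (∀ k, k ≤ N → 0 ≤ ∑ i ∈ Finset.range k, d i) →
    (∀ i j, i ≤ j → j < N → d i ≠ 0 → d j ≠ 0 → w j ≤ w i) →
    ∀ c : ℝ, 0 ≤ c → (∀ i, i < N → d i ≠ 0 → c ≤ w i) →
    c * ∑ i ∈ Finset.range N, d i ≤ ∑ i ∈ Finset.range N, w i * d i := by
  intro N
  induction N with
  | zero => intro d w _ _ c hc _; simp
  | succ N ih =>
    intro d w hpre hmono c hc hcw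
    rw [Finset.sum_range_succ, Finset.sum_range_succ]
    by_cases hdN : d N = 0
    · have key := ih d w (fun k hk => hpre k (hk.trans (Nat.le_succ N)))
        (fun i j hij hj => hmono i j hij (hj.trans (Nat.lt_succ_self N)))
        c hc (fun i hi => hcw i (hi.trans (Nat.lt_succ_self N)))
      rw [hdN]
      ring_nf
      ring_nf at key
      linarith
    · have hwN : c ≤ w N := hcw N (Nat.lt_succ_self N) hdN
      have h0 : 0 ≤ w N := le_trans hc hwN
      have hmN : ∀ i, i < N → d i ≠ 0 → w N ≤ w i := fun i hi hdi =>
        hmono i N (le_of_lt hi) (Nat.lt_succ_self N) hdi hdN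
      have key := ih d w (fun k hk => hpre k (hk.trans (Nat.le_succ N)))
        (fun i j hij hj => hmono i j hij (hj.trans (Nat.lt_succ_self N))) (w N) h0 hmN
      have hS : 0 ≤ ∑ i ∈ Finset.range (N + 1), d i := hpre (N + 1) le_rfl
      rw [Finset.sum_range_succ] at hS
      nlinarith [mul_nonneg (sub_nonneg.2 hwN) hS]

/-- Core log-ratio comparison. -/
lemma log_slope_core {p p' x y : ℝ} (h0 : 0 ≤ p') (h1 : p' ≤ p) (h2 : 0 ≤ y) (h3 : y ≤ x)
    (h4 : p * x < 1) :
    Real.log (1 - p' * y) - Real.log (1 - p' * x) ≤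
      Real.log (1 - p * y) - Real.log (1 - p * x) := by
  have hx0 : 0 ≤ x := le_trans h2 h3
  have hp0 : 0 ≤ p := le_trans h0 h1
  have hpx : 0 < 1 - p * x := by linarith
  have hp'x : 0 < 1 - p' * x := by nlinarith
  have hpy : 0 < 1 - p * y := by nlinarith
  have hp'y : 0 < 1 - p' * y := by nlinarith
  have key : (1 - p' * y) * (1 - p * x) ≤ (1 - p * y) * (1 - p' * x) := by
    nlinarith [mul_nonneg (sub_nonneg.2 h1) (sub_nonneg.2 h3)]
  have lkey : Real.log ((1 - p' * y) * (1 - p * x)) ≤ Real.log ((1 - p * y) * (1 - p' * x)) :=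
    Real.log_le_log (by positivity) key
  rw [Real.log_mul (ne_of_gt hp'y) (ne_of_gt hpx), Real.log_mul (ne_of_gt hpy) (ne_of_gt hp'x)]
    at lkey
  linarith

/-- Three-chord slope comparison for concave functions. -/
lemma concave_slope_le {f : ℝ → ℝ} {s : Set ℝ} (hf : ConcaveOn ℝ s f) {a b a' b' : ℝ}
    (ha : a ∈ s) (hb : b ∈ s) (ha' : a' ∈ s) (hb' : b' ∈ s)
    (haa : a ≤ a') (hbb : b ≤ b') (hab : a < b) (hab' : a' < b') :
    (f b' - f a') / (b' - a') ≤ (f b - f a) / (b - a) := by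
  have hsec : ∀ {p q r : ℝ}, p ∈ s → q ∈ s → r ∈ s → q ≠ p → r ≠ p → q ≤ r →
      (f r - f p) / (r - p) ≤ (f q - f p) / (q - p) := by
    intro p q r hp hq hr hqp hrp hqr
    have h := hf.neg.secant_mono hp hq hr hqp hrp hqr
    simp only [Pi.neg_apply] at h
    have e1 : (-f q - -f p) / (q - p) = -((f q - f p) / (q - p)) := by ring
    have e2 : (-f r - -f p) / (r - p) = -((f r - f p) / (r - p)) := by ring
    rw [e1, e2] at h
    linarith
  have hA : (f b' - f a') / (b' - a') ≤ (f b' - f a) / (b' - a) := by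
    have h1 := hsec hb' ha ha' (ne_of_lt (lt_of_le_of_lt haa hab')) (ne_of_lt hab') haa
    have e1 : (f a' - f b') / (a' - b') = (f b' - f a') / (b' - a') := by
      rw [← neg_div_neg_eq, neg_sub, neg_sub]
    have e2 : (f a - f b') / (a - b') = (f b' - f a) / (b' - a) := by
      rw [← neg_div_neg_eq, neg_sub, neg_sub]
    rw [e1, e2] at h1
    exact h1
  have hB : (f b' - f a) / (b' - a) ≤ (f b - f a) / (b - a) :=
    hsec ha hb hb' (ne_of_gt hab) (ne_of_gt (lt_of_lt_of_le hab hbb)) hbb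
  linarith

/-- log of a positive concave function is concave. -/
lemma concaveOn_log_comp {s : Set ℝ} {h : ℝ → ℝ} (hconc : ConcaveOn ℝ s h)
    (hpos : ∀ x ∈ s, 0 < h x) : ConcaveOn ℝ s fun x => Real.log (h x) := by
  refine ⟨hconc.1, fun x hx y hy a b ha hb hab => ?_⟩
  have hx' := hpos x hx
  have hy' := hpos y hy
  have hcomb : 0 < a * h x + b * h y := by
    rcases ha.lt_or_eq with ha' | ha'
    · nlinarith [mul_pos ha' hx', mul_nonneg hb hy'.le]
    · nlinarith [mul_pos (show (0:ℝ) < b by linarith) hy', mul_nonneg ha hx'.le]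
  have step1 : a • Real.log (h x) + b • Real.log (h y) ≤ Real.log (a * h x + b * h y) := by
    have := strictConcaveOn_log_Ioi.concaveOn.2 (Set.mem_Ioi.2 hx') (Set.mem_Ioi.2 hy') ha hb hab
    simpa [smul_eq_mul] using this
  have step2 : Real.log (a * h x + b * h y) ≤ Real.log (h (a • x + b • y)) :=
    Real.log_le_log hcomb (by simpa [smul_eq_mul] using hconc.2 hx hy ha hb hab)
  exact le_trans step1 step2

/-- `1 - h t * cst` is concave whenever `h` is convex and `cst ≥ 0`. -/
lemma one_sub_mul_concave {s : Set ℝ} {h : ℝ → ℝ} (hh : ConvexOn ℝ s h) {cst : ℝ}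
    (hcst : 0 ≤ cst) : ConcaveOn ℝ s fun t => 1 - h t * cst := by
  have h1 := (hh.smul hcst).neg
  have h2 := h1.add_const 1
  have : (fun t => 1 - h t * cst) = fun t => (-(fun x => cst • h x)) t + 1 := by
    funext t; simp [smul_eq_mul]; ring
  rw [this]
  exact h2

/-- `exp (k * a)` is convex in `a`. -/
lemma convexOn_exp_mul (k : ℝ) : ConvexOn ℝ Set.univ fun a : ℝ => Real.exp (k * a) := by
  refine ⟨convex_univ, fun x _ y _ a b ha hb hab => ?_⟩
  have h := convexOn_exp.2 (Set.mem_univ (k * x)) (Set.mem_univ (k * y)) ha hb hab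
  simp only [smul_eq_mul] at h ⊢
  have e : k * (a * x + b * y) = a * (k * x) + b * (k * y) := by ring
  rw [e]
  exact h

/-- The key majorization inequality for sums of monotone concave functions with
cross-slope comparisons. -/
lemma key_sum (m : ℕ) (L : ℕ → ℝ → ℝ) (V U : ℕ → ℝ)
    (hV : ∀ i, 0 < V i) (hU : ∀ i, 0 < U i)
    (hVm : ∀ i j, i ≤ j → j < m → V i ≤ V j)
    (hUm : ∀ i j, i ≤ j → j < m → U i ≤ U j)
    (hpre : ∀ k, k ≤ m → 0 ≤ ∑ i ∈ Finset.range k, (U i - V i))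
    (hmono : ∀ i, i < m → MonotoneOn (L i) (Set.Ioi 0))
    (hconc : ∀ i, i < m → ConcaveOn ℝ (Set.Ioi 0) (L i))
    (hcross : ∀ i j, i ≤ j → j < m → ∀ a b : ℝ, 0 < a → a ≤ b →
      L j b - L j a ≤ L i b - L i a) :
    ∑ i ∈ Finset.range m, L i (V i) ≤ ∑ i ∈ Finset.range m, L i (U i) := by
  have slope_eq : ∀ k, (L k (max (V k) (U k)) - L k (min (V k) (U k))) /
      (max (V k) (U k) - min (V k) (U k)) = (L k (U k) - L k (V k)) / (U k - V k) := by
    intro k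
    rcases le_total (V k) (U k) with h | h
    · rw [min_eq_left h, max_eq_right h]
    · rw [min_eq_right h, max_eq_left h, ← neg_div_neg_eq, neg_sub, neg_sub]
  set w : ℕ → ℝ := fun k => (L k (max (V k) (U k)) - L k (min (V k) (U k))) /
      (max (V k) (U k) - min (V k) (U k)) with hwdef
  have hminpos : ∀ k, (0:ℝ) < min (V k) (U k) := fun k => lt_min (hV k) (hU k)
  have hmaxpos : ∀ k, (0:ℝ) < max (V k) (U k) := fun k => lt_of_lt_of_le (hV k) (le_max_left _ _)
  have hwd : ∀ i ∈ Finset.range m, w i * (U i - V i) = L i (U i) - L i (V i) := by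
    intro i _
    by_cases h : U i - V i = 0
    · have hEq : U i = V i := sub_eq_zero.1 h
      rw [h, mul_zero, hEq, sub_self]
    · rw [hwdef]
      dsimp only
      rw [slope_eq i, div_mul_cancel₀ _ h]
  have hw0 : ∀ i, i < m → U i - V i ≠ 0 → 0 ≤ w i := by
    intro i hi hdi
    have hne : V i ≠ U i := (Ne.symm (sub_ne_zero.1 hdi))
    have hlt : min (V i) (U i) < max (V i) (U i) := min_lt_max.2 hne
    apply div_nonneg _ (by linarith)
    have := hmono i hi (Set.mem_Ioi.2 (hminpos i)) (Set.mem_Ioi.2 (hmaxpos i)) (min_le_max)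
    linarith
  have hwmono : ∀ i j, i ≤ j → j < m → U i - V i ≠ 0 → U j - V j ≠ 0 → w j ≤ w i := by
    intro i j hij hj hdi hdj
    have hi : i < m := Nat.lt_of_le_of_lt hij hj
    have hne_i : V i ≠ U i := Ne.symm (sub_ne_zero.1 hdi)
    have hne_j : V j ≠ U j := Ne.symm (sub_ne_zero.1 hdj)
    have hlt_i : min (V i) (U i) < max (V i) (U i) := min_lt_max.2 hne_i
    have hlt_j : min (V j) (U j) < max (V j) (U j) := min_lt_max.2 hne_j
    have h1 : L j (max (V j) (U j)) - L j (min (V j) (U j)) ≤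
        L i (max (V j) (U j)) - L i (min (V j) (U j)) :=
      hcross i j hij hj _ _ (hminpos j) min_le_max
    have h2 : w j ≤ (L i (max (V j) (U j)) - L i (min (V j) (U j))) /
        (max (V j) (U j) - min (V j) (U j)) := by
      rw [hwdef]
      dsimp only
      apply div_le_div_of_nonneg_right h1 (by linarith) |>.trans_eq rfl
    have h3 : (L i (max (V j) (U j)) - L i (min (V j) (U j))) /
        (max (V j) (U j) - min (V j) (U j)) ≤ w i := by
      rw [hwdef]
      dsimp only
      exact concave_slope_le (hconc i hi) (Set.mem_Ioi.2 (hminpos i)) (Set.mem_Ioi.2 (hmaxpos i))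
        (Set.mem_Ioi.2 (hminpos j)) (Set.mem_Ioi.2 (hmaxpos j))
        (min_le_min (hVm i j hij hj) (hUm i j hij hj))
        (max_le_max (hVm i j hij hj) (hUm i j hij hj)) hlt_i hlt_j
    exact le_trans h2 h3
  have main := abel_aux m (fun i => U i - V i) w hpre hwmono 0 le_rfl
    (fun i hi hd => hw0 i hi hd)
  rw [zero_mul] at main
  rw [Finset.sum_congr rfl hwd, Finset.sum_sub_distrib] at main
  linarith

lemma range_filter_lt (n k : ℕ) (hk : k ≤ n) :
    (Finset.range n).filter (fun i => i < k) = Finset.range k := by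
  ext j
  simp only [Finset.mem_filter, Finset.mem_range]
  omega

lemma prefixSum_eq {n : ℕ} (a : Fin n → ℝ) (b : ℕ → ℝ)
    (hb : ∀ (i : ℕ) (h : i < n), b i = a ⟨i, h⟩) {k : ℕ} (hk : k ≤ n) :
    prefixSum a k = ∑ i ∈ Finset.range k, b i := by
  unfold prefixSum
  rw [Finset.sum_filter]
  have e1 : ∀ i : Fin n, (if (i : ℕ) < k then a i else 0)
      = (fun j => if j < k then b j else 0) (i : ℕ) := by
    intro i
    dsimp only
    by_cases h : (i : ℕ) < k
    · simp only [if_pos h, hb i.1 i.isLt, Fin.eta]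
    · simp [h]
  rw [Finset.sum_congr rfl (fun i _ => e1 i),
    Fin.sum_univ_eq_sum_range (fun j => if j < k then b j else 0) n,
    ← Finset.sum_filter, range_filter_lt n k hk]

lemma prefixProd_eq {n : ℕ} (a : Fin n → ℝ) (b : ℕ → ℝ)
    (hb : ∀ (i : ℕ) (h : i < n), b i = a ⟨i, h⟩) {k : ℕ} (hk : k ≤ n) :
    prefixProd a k = ∏ i ∈ Finset.range k, b i := by
  unfold prefixProd
  rw [Finset.prod_filter]
  have e1 : ∀ i : Fin n, (if (i : ℕ) < k then a i else 1)
      = (fun j => if j < k then b j else 1) (i : ℕ) := by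
    intro i
    dsimp only
    by_cases h : (i : ℕ) < k
    · simp only [if_pos h, hb i.1 i.isLt, Fin.eta]
    · simp [h]
  rw [Finset.prod_congr rfl (fun i _ => e1 i),
    Fin.prod_univ_eq_prod_range (fun j => if j < k then b j else 1) n,
    ← Finset.prod_filter, range_filter_lt n k hk]

lemma reindex_tail (n : ℕ) (f : ℕ → ℝ) {k : ℕ} (hk : k ≤ n) :
    ∑ j ∈ Finset.range k, f (n - j) = ∑ m ∈ Finset.Icc (n - k + 1) n, f m := by
  apply Finset.sum_nbij' (i := fun j => n - j) (j := fun m => n - m)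
  · intro a ha
    simp only [Finset.mem_range] at ha
    simp only [Finset.mem_Icc]
    omega
  · intro a ha
    simp only [Finset.mem_Icc] at ha
    simp only [Finset.mem_range]
    omega
  · intro a ha
    simp only [Finset.mem_range] at ha
    omega
  · intro a ha
    simp only [Finset.mem_Icc] at ha
    omega
  · intro a _
    rfl

/-- Stochastic-order step: integrating an antitone function against the two pmfs. -/
lemma qstep (n : ℕ) (q₁ q₂ Φ : ℕ → ℝ)
    (hsum : ∑ m ∈ Finset.Icc 1 n, q₁ m = ∑ m ∈ Finset.Icc 1 n, q₂ m)
    (hst : ∀ k, 1 ≤ k → k ≤ n →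
      ∑ m ∈ Finset.Icc k n, q₂ m ≤ ∑ m ∈ Finset.Icc k n, q₁ m)
    (hanti : ∀ k m, k ≤ m → Φ m ≤ Φ k) :
    ∑ m ∈ Finset.Icc 1 n, q₁ m * Φ m ≤ ∑ m ∈ Finset.Icc 1 n, q₂ m * Φ m := by
  have hpre : ∀ k, k ≤ n → 0 ≤ ∑ j ∈ Finset.range k, (q₁ (n - j) - q₂ (n - j)) := by
    intro k hk
    rcases Nat.eq_zero_or_pos k with h0 | h0
    · simp [h0]
    · have e := reindex_tail n (fun m => q₁ m - q₂ m) hk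
      rw [e, Finset.sum_sub_distrib]
      have h1 : 1 ≤ n - k + 1 := by omega
      have h2 : n - k + 1 ≤ n := by omega
      have := hst (n - k + 1) h1 h2
      linarith
  have habel := abel_aux n (fun j => q₁ (n - j) - q₂ (n - j)) (fun j => Φ 1 - Φ (n - j)) hpre
    (fun i j hij hj _ _ => by
      have : Φ (n - i) ≤ Φ (n - j) := hanti (n - j) (n - i) (by omega)
      linarith)
    0 le_rfl
    (fun i hi _ => by
      have : Φ (n - i) ≤ Φ 1 := hanti 1 (n - i) (by omega)
      linarith)
  rw [zero_mul] at habel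
  have e2 : ∑ j ∈ Finset.range n, (Φ 1 - Φ (n - j)) * (q₁ (n - j) - q₂ (n - j))
      = ∑ m ∈ Finset.Icc 1 n, (Φ 1 - Φ m) * (q₁ m - q₂ m) := by
    have := reindex_tail n (fun m => (Φ 1 - Φ m) * (q₁ m - q₂ m)) (le_refl n)
    simpa using this
  rw [e2] at habel
  have e3 : ∑ m ∈ Finset.Icc 1 n, (Φ 1 - Φ m) * (q₁ m - q₂ m)
      = Φ 1 * ((∑ m ∈ Finset.Icc 1 n, q₁ m) - ∑ m ∈ Finset.Icc 1 n, q₂ m)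
        - ((∑ m ∈ Finset.Icc 1 n, q₁ m * Φ m) - ∑ m ∈ Finset.Icc 1 n, q₂ m * Φ m) := by
    rw [mul_sub, Finset.mul_sum, Finset.mul_sum, ← Finset.sum_sub_distrib,
      ← Finset.sum_sub_distrib, ← Finset.sum_sub_distrib]
    apply Finset.sum_congr rfl
    intro m _
    ring
  rw [e3] at habel
  rw [hsum] at habel
  linarith


/-- Theorem 3.6: Kumaraswamy-G severities, largest claim amounts with
random numbers of claims, usual stochastic order. -/
theorem stmt_6 {n : ℕ} (hn : 1 ≤ n) (γ : ℝ) (hγ : 0 < γ) (G g : ℝ → ℝ)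
    (hG : ∀ x, 0 ≤ G x ∧ G x < 1)
    (hg : ∀ t > 0, 0 < g t ∧ g t < 1)
    (hg_anti : AntitoneOn g (Set.Ioi 0))
    (hg_conv : ConvexOn ℝ (Set.Ioi 0) g)
    (v u α β : Fin n → ℝ)
    (hv : ∀ i, 0 < v i) (hu : ∀ i, 0 < u i)
    (hα : ∀ i, 0 < α i) (hβ : ∀ i, 0 < β i)
    (hvm : Monotone v) (hum : Monotone u) (hαm : Monotone α) (hβm : Monotone β)
    (hmajα : ∀ k, 1 ≤ k → k ≤ n → prefixSum α k ≤ prefixSum β k)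
    (hmajv : ∀ k, 1 ≤ k → k ≤ n → prefixSum v k ≤ prefixSum u k)
    (q₁ q₂ : ℕ → ℝ)
    (hq₁ : ∀ m ∈ Finset.Icc 1 n, 0 ≤ q₁ m) (hq₂ : ∀ m ∈ Finset.Icc 1 n, 0 ≤ q₂ m)
    (hq₁sum : ∑ m ∈ Finset.Icc 1 n, q₁ m = 1)
    (hq₂sum : ∑ m ∈ Finset.Icc 1 n, q₂ m = 1)
    (hst : ∀ k, 1 ≤ k → k ≤ n →
      ∑ m ∈ Finset.Icc k n, q₂ m ≤ ∑ m ∈ Finset.Icc k n, q₁ m) :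
    ∀ x : ℝ,
      ∑ m ∈ Finset.Icc 1 n,
          q₁ m * prefixProd (fun i => 1 - g (v i) * (1 - G x ^ γ) ^ α i) m ≤
        ∑ m ∈ Finset.Icc 1 n,
          q₂ m * prefixProd (fun i => 1 - g (u i) * (1 - G x ^ γ) ^ β i) m := by
  intro x
  obtain ⟨hGx0, hGx1⟩ := hG x
  set c : ℝ := 1 - G x ^ γ with hcdef
  have hc0 : 0 < c := by
    have := Real.rpow_lt_one hGx0 hGx1 hγ
    rw [hcdef]; linarith
  have hc1 : c ≤ 1 := by
    have := Real.rpow_nonneg hGx0 γ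
    rw [hcdef]; linarith
  -- extended sequences
  set V : ℕ → ℝ := fun i => if h : i < n then v ⟨i, h⟩ else 1 with hVdef
  set U : ℕ → ℝ := fun i => if h : i < n then u ⟨i, h⟩ else 1 with hUdef
  set A : ℕ → ℝ := fun i => if h : i < n then α ⟨i, h⟩ else 1 with hAdef
  set B : ℕ → ℝ := fun i => if h : i < n then β ⟨i, h⟩ else 1 with hBdef
  have hVpos : ∀ i, 0 < V i := by
    intro i; rw [hVdef]; dsimp only; split
    · exact hv _
    · exact one_pos
  have hUpos : ∀ i, 0 < U i := by
    intro i; rw [hUdef]; dsimp only; split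
    · exact hu _
    · exact one_pos
  have hApos : ∀ i, 0 < A i := by
    intro i; rw [hAdef]; dsimp only; split
    · exact hα _
    · exact one_pos
  have hBpos : ∀ i, 0 < B i := by
    intro i; rw [hBdef]; dsimp only; split
    · exact hβ _
    · exact one_pos
  have hVmono : ∀ i j, i ≤ j → j < n → V i ≤ V j := by
    intro i j hij hj
    have hi : i < n := Nat.lt_of_le_of_lt hij hj
    rw [hVdef]; dsimp only; rw [dif_pos hi, dif_pos hj]
    exact hvm (Fin.mk_le_mk.2 hij)
  have hUmono : ∀ i j, i ≤ j → j < n → U i ≤ U j := by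
    intro i j hij hj
    have hi : i < n := Nat.lt_of_le_of_lt hij hj
    rw [hUdef]; dsimp only; rw [dif_pos hi, dif_pos hj]
    exact hum (Fin.mk_le_mk.2 hij)
  have hAmono : ∀ i j, i ≤ j → j < n → A i ≤ A j := by
    intro i j hij hj
    have hi : i < n := Nat.lt_of_le_of_lt hij hj
    rw [hAdef]; dsimp only; rw [dif_pos hi, dif_pos hj]
    exact hαm (Fin.mk_le_mk.2 hij)
  have hBmono : ∀ i j, i ≤ j → j < n → B i ≤ B j := by
    intro i j hij hj
    have hi : i < n := Nat.lt_of_le_of_lt hij hj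
    rw [hBdef]; dsimp only; rw [dif_pos hi, dif_pos hj]
    exact hβm (Fin.mk_le_mk.2 hij)
  have hfact : ∀ t s : ℝ, 0 < t → 0 < s → s ≤ 1 → 0 < 1 - g t * s ∧ 1 - g t * s < 1 := by
    intro t s ht hs hs1
    obtain ⟨h1, h2⟩ := hg t ht
    constructor <;> nlinarith
  have hcA : ∀ i, 0 < c ^ A i ∧ c ^ A i ≤ 1 := fun i =>
    ⟨Real.rpow_pos_of_pos hc0 _, Real.rpow_le_one hc0.le hc1 (hApos i).le⟩
  have hcB : ∀ i, 0 < c ^ B i ∧ c ^ B i ≤ 1 := fun i =>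
    ⟨Real.rpow_pos_of_pos hc0 _, Real.rpow_le_one hc0.le hc1 (hBpos i).le⟩
  set F₁ : ℕ → ℝ := fun i => 1 - g (V i) * c ^ A i with hF₁def
  set F₂ : ℕ → ℝ := fun i => 1 - g (U i) * c ^ B i with hF₂def
  have hF₁ : ∀ i, 0 < F₁ i ∧ F₁ i < 1 := fun i => hfact _ _ (hVpos i) (hcA i).1 (hcA i).2
  have hF₂ : ∀ i, 0 < F₂ i ∧ F₂ i < 1 := fun i => hfact _ _ (hUpos i) (hcB i).1 (hcB i).2
  have hΦanti : ∀ k m', k ≤ m' →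
      (∏ i ∈ Finset.range m', F₂ i) ≤ ∏ i ∈ Finset.range k, F₂ i := by
    intro k m' hkm
    induction m', hkm using Nat.le_induction with
    | base => exact le_rfl
    | succ m' hkm ih =>
      rw [Finset.prod_range_succ]
      have hpos : 0 < ∏ i ∈ Finset.range m', F₂ i := Finset.prod_pos fun i _ => (hF₂ i).1
      nlinarith [(hF₂ m').1, (hF₂ m').2]
  have hPP : ∀ m, 1 ≤ m → m ≤ n →
      prefixProd (fun i : Fin n => 1 - g (v i) * c ^ α i) m ≤ ∏ i ∈ Finset.range m, F₂ i := by
    intro m hm1 hmn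
    have e1 : prefixProd (fun i : Fin n => 1 - g (v i) * c ^ α i) m
        = ∏ i ∈ Finset.range m, F₁ i := by
      apply prefixProd_eq _ F₁ _ hmn
      intro i h
      rw [hF₁def, hVdef, hAdef]
      simp only [dif_pos h]
    have step1 : ∑ i ∈ Finset.range m, Real.log (1 - g (V i) * c ^ A i)
        ≤ ∑ i ∈ Finset.range m, Real.log (1 - g (U i) * c ^ A i) := by
      apply key_sum m (fun i t => Real.log (1 - g t * c ^ A i)) V U hVpos hUpos
        (fun i j hij hj => hVmono i j hij (lt_of_lt_of_le hj hmn))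
        (fun i j hij hj => hUmono i j hij (lt_of_lt_of_le hj hmn))
      · intro k hk
        rcases Nat.eq_zero_or_pos k with h0 | h0
        · simp [h0]
        · have hkn : k ≤ n := le_trans hk hmn
          have hmaj := hmajv k h0 hkn
          rw [prefixSum_eq v V (fun i h => by rw [hVdef]; simp only [dif_pos h]) hkn,
            prefixSum_eq u U (fun i h => by rw [hUdef]; simp only [dif_pos h]) hkn] at hmaj
          rw [Finset.sum_sub_distrib]
          linarith
      · intro i _ t1 ht1 t2 ht2 h12
        have h1 := hfact t1 (c ^ A i) (Set.mem_Ioi.1 ht1) (hcA i).1 (hcA i).2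
        apply Real.log_le_log h1.1
        have := hg_anti ht1 ht2 h12
        nlinarith [(hcA i).1]
      · intro i _
        apply concaveOn_log_comp (one_sub_mul_concave hg_conv (hcA i).1.le)
        intro t ht
        exact (hfact t _ (Set.mem_Ioi.1 ht) (hcA i).1 (hcA i).2).1
      · intro i j hij hj a b ha hab
        have hb : 0 < b := lt_of_lt_of_le ha hab
        have hAij : A i ≤ A j := hAmono i j hij (lt_of_lt_of_le hj hmn)
        have hga := hg a ha
        have core := log_slope_core (p := c ^ A i) (p' := c ^ A j) (x := g a) (y := g b)
          (Real.rpow_pos_of_pos hc0 _).le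
          (Real.rpow_le_rpow_of_exponent_ge hc0 hc1 hAij)
          (hg b hb).1.le
          (hg_anti (Set.mem_Ioi.2 ha) (Set.mem_Ioi.2 hb) hab)
          (by nlinarith [(hcA i).1, (hcA i).2, hga.1, hga.2])
        simpa [mul_comm] using core
    have step2 : ∑ i ∈ Finset.range m, Real.log (1 - g (U i) * c ^ A i)
        ≤ ∑ i ∈ Finset.range m, Real.log (1 - g (U i) * c ^ B i) := by
      apply key_sum m (fun i a => Real.log (1 - g (U i) * c ^ a)) A B hApos hBpos
        (fun i j hij hj => hAmono i j hij (lt_of_lt_of_le hj hmn))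
        (fun i j hij hj => hBmono i j hij (lt_of_lt_of_le hj hmn))
      · intro k hk
        rcases Nat.eq_zero_or_pos k with h0 | h0
        · simp [h0]
        · have hkn : k ≤ n := le_trans hk hmn
          have hmaj := hmajα k h0 hkn
          rw [prefixSum_eq α A (fun i h => by rw [hAdef]; simp only [dif_pos h]) hkn,
            prefixSum_eq β B (fun i h => by rw [hBdef]; simp only [dif_pos h]) hkn] at hmaj
          rw [Finset.sum_sub_distrib]
          linarith
      · intro i _ a1 ha1 a2 ha2 h12
        have hgU := hg (U i) (hUpos i)
        have hca1 : 0 < c ^ a1 ∧ c ^ a1 ≤ 1 :=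
          ⟨Real.rpow_pos_of_pos hc0 _, Real.rpow_le_one hc0.le hc1 (Set.mem_Ioi.1 ha1).le⟩
        apply Real.log_le_log (hfact _ _ (hUpos i) hca1.1 hca1.2).1
        have := Real.rpow_le_rpow_of_exponent_ge hc0 hc1 h12
        nlinarith [hgU.1]
      · intro i _
        have hgU := hg (U i) (hUpos i)
        have hexp : ConvexOn ℝ (Set.Ioi 0) fun a : ℝ => Real.exp (Real.log c * a) :=
          (convexOn_exp_mul (Real.log c)).subset (Set.subset_univ _) (convex_Ioi 0)
        have hinner : ConcaveOn ℝ (Set.Ioi 0)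
            fun a => 1 - Real.exp (Real.log c * a) * g (U i) :=
          one_sub_mul_concave hexp hgU.1.le
        have heq : (fun a : ℝ => Real.log (1 - g (U i) * c ^ a))
            = fun a => Real.log (1 - Real.exp (Real.log c * a) * g (U i)) := by
          funext a
          rw [Real.rpow_def_of_pos hc0, mul_comm]
        rw [heq]
        apply concaveOn_log_comp hinner
        intro a ha'
        have ha0 : 0 < a := Set.mem_Ioi.1 ha'
        rw [← Real.rpow_def_of_pos hc0]
        have hca : 0 < c ^ a ∧ c ^ a ≤ 1 :=
          ⟨Real.rpow_pos_of_pos hc0 _, Real.rpow_le_one hc0.le hc1 ha0.le⟩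
        nlinarith [hgU.1, hgU.2, hca.1, hca.2]
      · intro i j hij hj a b ha hab
        have hUij : U i ≤ U j := hUmono i j hij (lt_of_lt_of_le hj hmn)
        have hgUi := hg (U i) (hUpos i)
        have hca : 0 < c ^ a ∧ c ^ a ≤ 1 :=
          ⟨Real.rpow_pos_of_pos hc0 _, Real.rpow_le_one hc0.le hc1 ha.le⟩
        exact log_slope_core (p := g (U i)) (p' := g (U j)) (x := c ^ a) (y := c ^ b)
          (hg (U j) (hUpos j)).1.le
          (hg_anti (Set.mem_Ioi.2 (hUpos i)) (Set.mem_Ioi.2 (hUpos j)) hUij)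
          (Real.rpow_pos_of_pos hc0 _).le
          (Real.rpow_le_rpow_of_exponent_ge hc0 hc1 hab)
          (by nlinarith [hgUi.1, hgUi.2, hca.1, hca.2])
    rw [e1]
    have ef1 : ∏ i ∈ Finset.range m, F₁ i
        = Real.exp (∑ i ∈ Finset.range m, Real.log (F₁ i)) := by
      rw [Real.exp_sum]
      exact Finset.prod_congr rfl fun i _ => (Real.exp_log (hF₁ i).1).symm
    have ef2 : ∏ i ∈ Finset.range m, F₂ i
        = Real.exp (∑ i ∈ Finset.range m, Real.log (F₂ i)) := by
      rw [Real.exp_sum]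
      exact Finset.prod_congr rfl fun i _ => (Real.exp_log (hF₂ i).1).symm
    rw [ef1, ef2]
    exact Real.exp_le_exp.2 (le_trans step1 step2)
  calc
    ∑ m ∈ Finset.Icc 1 n, q₁ m * prefixProd (fun i => 1 - g (v i) * c ^ α i) m
        ≤ ∑ m ∈ Finset.Icc 1 n, q₁ m * ∏ i ∈ Finset.range m, F₂ i := by
          apply Finset.sum_le_sum
          intro m hm
          obtain ⟨hm1, hmn⟩ := Finset.mem_Icc.1 hm
          exact mul_le_mul_of_nonneg_left (hPP m hm1 hmn) (hq₁ m hm)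
    _ ≤ ∑ m ∈ Finset.Icc 1 n, q₂ m * ∏ i ∈ Finset.range m, F₂ i := by
          have := qstep n q₁ q₂ (fun m => ∏ i ∈ Finset.range m, F₂ i)
            (by rw [hq₁sum, hq₂sum]) hst (fun k m' hkm => hΦanti k m' hkm)
          simpa using this
    _ = ∑ m ∈ Finset.Icc 1 n, q₂ m * prefixProd (fun i => 1 - g (u i) * c ^ β i) m := by
          apply Finset.sum_congr rfl
          intro m hm
          obtain ⟨hm1, hmn⟩ := Finset.mem_Icc.1 hm
          rw [prefixProd_eq (fun i : Fin n => 1 - g (u i) * c ^ β i) F₂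
            (fun i h => by rw [hF₂def, hUdef, hBdef]; simp only [dif_pos h]) hmn]
end

section
/- Let n ≥ 1. Let s : ℝ → ℝ satisfy 0 < s(a) ≤ 1 for every a > 0, s antitone and convex on (0,∞). Let g : ℝ → ℝ satisfy 0 < g(t) < 1 for every t > 0, g antitone and convex on (0,∞). Let w ∈ [0,1] and let π be a permutation of Fin n. Let v, α : Fin n → ℝ be positive tuples, and define u j = w·v j + (1−w)·v (π j) and β j = w·α j + (1−w)·α (π j) for every j. Assume the similar-ordering conditions (v i − v j)·(α i − α j) ≥ 0 and (u i − u j)·(β i − β j) ≥ 0 for all i, j. Then ∏_{i=1}^n (1 − g(v i)·s(α i)) ≤ ∏_{i=1}^n (1 − g(u i)·s(β i)). -/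
open Finset

/-- Theorem 3.9 (core comparison): largest claim amounts under a single
T-transform of the parameter matrix, usual stochastic order. -/
theorem stmt_10 {n : ℕ} (hn : 1 ≤ n) (s g : ℝ → ℝ)
    (hs_pos : ∀ a > 0, 0 < s a) (hs_le : ∀ a > 0, s a ≤ 1)
    (hs_anti : AntitoneOn s (Set.Ioi 0))
    (hs_conv : ConvexOn ℝ (Set.Ioi 0) s)
    (hg : ∀ t > 0, 0 < g t ∧ g t < 1)
    (hg_anti : AntitoneOn g (Set.Ioi 0))
    (hg_conv : ConvexOn ℝ (Set.Ioi 0) g)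
    (w : ℝ) (hw0 : 0 ≤ w) (hw1 : w ≤ 1)
    (π : Equiv.Perm (Fin n))
    (v α u β : Fin n → ℝ)
    (hv : ∀ i, 0 < v i) (hα : ∀ i, 0 < α i)
    (hu_def : ∀ j, u j = w * v j + (1 - w) * v (π j))
    (hβ_def : ∀ j, β j = w * α j + (1 - w) * α (π j))
    (hsimv : ∀ i j, 0 ≤ (v i - v j) * (α i - α j))
    (hsimu : ∀ i j, 0 ≤ (u i - u j) * (β i - β j)) :
    ∏ i, (1 - g (v i) * s (α i)) ≤ ∏ i, (1 - g (u i) * s (β i)) := by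
  have h1w : 0 ≤ 1 - w := by linarith
  have hmem : ∀ x : ℝ, 0 < x → x ∈ Set.Ioi (0:ℝ) := fun x hx => hx
  have hu_pos : ∀ i, 0 < u i := by
    intro i; rw [hu_def]
    have hmin : 0 < min (v i) (v (π i)) := lt_min (hv i) (hv (π i))
    nlinarith [mul_le_mul_of_nonneg_left (min_le_left (v i) (v (π i))) hw0,
      mul_le_mul_of_nonneg_left (min_le_right (v i) (v (π i))) h1w]
  have hβ_pos : ∀ i, 0 < β i := by
    intro i; rw [hβ_def]
    have hmin : 0 < min (α i) (α (π i)) := lt_min (hα i) (hα (π i))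
    nlinarith [mul_le_mul_of_nonneg_left (min_le_left (α i) (α (π i))) hw0,
      mul_le_mul_of_nonneg_left (min_le_right (α i) (α (π i))) h1w]
  -- basic bounds on the per-claim probabilities
  have hlt1 : ∀ i, g (v i) * s (α i) < 1 := by
    intro i
    obtain ⟨hg0, hg1⟩ := hg (v i) (hv i)
    have hs0 := hs_pos (α i) (hα i)
    have hs1 := hs_le (α i) (hα i)
    nlinarith
  have hpos : ∀ i, 0 < g (v i) * s (α i) := by
    intro i
    exact mul_pos (hg (v i) (hv i)).1 (hs_pos (α i) (hα i))
  -- key pointwise inequality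
  have key : ∀ i, g (u i) * s (β i)
      ≤ w * (g (v i) * s (α i)) + (1 - w) * (g (v (π i)) * s (α (π i))) := by
    intro i
    have hgu : g (u i) ≤ w * g (v i) + (1 - w) * g (v (π i)) := by
      rw [hu_def i]
      simpa using hg_conv.2 (hmem _ (hv i)) (hmem _ (hv (π i))) hw0 h1w (by ring)
    have hsβ : s (β i) ≤ w * s (α i) + (1 - w) * s (α (π i)) := by
      rw [hβ_def i]
      simpa using hs_conv.2 (hmem _ (hα i)) (hmem _ (hα (π i))) hw0 h1w (by ring)
    have hsign : 0 ≤ (g (v i) - g (v (π i))) * (s (α i) - s (α (π i))) := by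
      rcases lt_trichotomy (v i) (v (π i)) with h | h | h
      · have hαle : α i ≤ α (π i) := by nlinarith [hsimv i (π i)]
        have h1 := hg_anti (hmem _ (hv i)) (hmem _ (hv (π i))) h.le
        have h2 := hs_anti (hmem _ (hα i)) (hmem _ (hα (π i))) hαle
        nlinarith
      · rw [h]; simp
      · have hαge : α (π i) ≤ α i := by nlinarith [hsimv i (π i)]
        have h1 := hg_anti (hmem _ (hv (π i))) (hmem _ (hv i)) h.le
        have h2 := hs_anti (hmem _ (hα (π i))) (hmem _ (hα i)) hαge
        nlinarith
    have hg1 := (hg (v i) (hv i)).1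
    have hg2 := (hg (v (π i)) (hv (π i))).1
    have hs1 := hs_pos (α i) (hα i)
    have hs2 := hs_pos (α (π i)) (hα (π i))
    have hG : 0 ≤ w * g (v i) + (1 - w) * g (v (π i)) := by nlinarith
    have step1 : g (u i) * s (β i)
        ≤ (w * g (v i) + (1 - w) * g (v (π i))) * (w * s (α i) + (1 - w) * s (α (π i))) :=
      mul_le_mul hgu hsβ (hs_pos (β i) (hβ_pos i)).le hG
    nlinarith [mul_nonneg (mul_nonneg hw0 h1w) hsign]
  -- termwise comparison against the geometric mean
  have hterm : ∀ i, (1 - g (v i) * s (α i)) ^ w * (1 - g (v (π i)) * s (α (π i))) ^ (1 - w)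
      ≤ 1 - g (u i) * s (β i) := by
    intro i
    have hA : (0:ℝ) ≤ 1 - g (v i) * s (α i) := by linarith [hlt1 i]
    have hB : (0:ℝ) ≤ 1 - g (v (π i)) * s (α (π i)) := by linarith [hlt1 (π i)]
    have h1 : (1 - g (v i) * s (α i)) ^ w * (1 - g (v (π i)) * s (α (π i))) ^ (1 - w)
        ≤ w * (1 - g (v i) * s (α i)) + (1 - w) * (1 - g (v (π i)) * s (α (π i))) :=
      Real.geom_mean_le_arith_mean2_weighted hw0 h1w hA hB (by ring)
    have h2 := key i
    linarith
  -- assemble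
  have hP : ∏ i, (1 - g (v i) * s (α i)) ^ w * (1 - g (v (π i)) * s (α (π i))) ^ (1 - w)
      ≤ ∏ i, (1 - g (u i) * s (β i)) := by
    refine Finset.prod_le_prod (fun i _ => ?_) (fun i _ => hterm i)
    have hA : (0:ℝ) ≤ 1 - g (v i) * s (α i) := by linarith [hlt1 i]
    have hB : (0:ℝ) ≤ 1 - g (v (π i)) * s (α (π i)) := by linarith [hlt1 (π i)]
    exact mul_nonneg (Real.rpow_nonneg hA w) (Real.rpow_nonneg hB (1 - w))
  have hQpos : 0 < ∏ i, (1 - g (v i) * s (α i)) :=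
    Finset.prod_pos (fun i _ => by linarith [hlt1 i])
  have hreidx : ∏ i, (1 - g (v (π i)) * s (α (π i))) = ∏ i, (1 - g (v i) * s (α i)) :=
    Equiv.prod_comp π (fun i => 1 - g (v i) * s (α i))
  have hsplit : ∏ i, (1 - g (v i) * s (α i)) ^ w * (1 - g (v (π i)) * s (α (π i))) ^ (1 - w)
      = (∏ i, (1 - g (v i) * s (α i))) ^ w *
        (∏ i, (1 - g (v (π i)) * s (α (π i)))) ^ (1 - w) := by
    rw [Finset.prod_mul_distrib,
      ← Real.finset_prod_rpow _ _ (fun i _ => by linarith [hlt1 i]) w,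
      ← Real.finset_prod_rpow _ _ (fun i _ => by linarith [hlt1 (π i)]) (1 - w)]
  calc ∏ i, (1 - g (v i) * s (α i))
      = (∏ i, (1 - g (v i) * s (α i))) ^ w *
        (∏ i, (1 - g (v (π i)) * s (α (π i)))) ^ (1 - w) := by
        rw [hreidx, ← Real.rpow_add hQpos]; norm_num
    _ = ∏ i, (1 - g (v i) * s (α i)) ^ w * (1 - g (v (π i)) * s (α (π i))) ^ (1 - w) :=
        hsplit.symm
    _ ≤ ∏ i, (1 - g (u i) * s (β i)) := hP
end

section
/- Let n ≥ 1 and let S : ℝ → ℝ be differentiable on [0,∞) with 0 < S(y) ≤ 1 for all y ≥ 0 and S′(y) = −f(y), where f : [0,∞) → ℝ is nonnegative and nonincreasing. Let g : ℝ → ℝ satisfy 0 < g(t) < 1 for every t > 0, g antitone and convex on (0,∞). Let w ∈ [0,1], π a permutation of Fin n, v, α : Fin n → ℝ positive tuples, and define u j = w·v j + (1−w)·v (π j) and β j = w·α j + (1−w)·α (π j). Assume (v i − v j)·(α i − α j) ≥ 0 and (u i − u j)·(β i − β j) ≥ 0 for all i, j. Then for every x ≥ 0: ∏_{i=1}^n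 (1 − g(v i)·S(α i · x)) ≤ ∏_{i=1}^n (1 − g(u i)·S(β i · x)). -/
/-!
Put `X i = 1 - g (v i) * S (α i * x)`. Since `f` is nonincreasing, `S` is convex and decreasing;
as `g` is decreasing too and `v`, `α` are similarly ordered, the numbers `g (v i)` and
`S (α i * x)` are similarly ordered, so the two-point Chebyshev inequality together with the
convexity of `g` and `S` gives `w * X j + (1 - w) * X (π j) ≤ 1 - g (u j) * S (β j * x)`.
By weighted AM-GM the left side dominates `X j ^ w * X (π j) ^ (1 - w)`, and the product of these
over `j` is `∏ X j` because `π` is a permutation.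
-/

open Finset

section Calculus

variable {D : Set ℝ} {F F' : ℝ → ℝ}

lemma convexOn_of_hasDerivAt_of_monotoneOn (hD : Convex ℝ D)
    (hF : ∀ y ∈ D, HasDerivAt F (F' y) y) (hF' : MonotoneOn F' D) : ConvexOn ℝ D F := by
  have hderiv : Set.EqOn F' (deriv F) (interior D) := fun y hy =>
    (hF y (interior_subset hy)).deriv.symm
  exact MonotoneOn.convexOn_of_deriv hD
    (fun y hy => (hF y hy).continuousAt.continuousWithinAt)
    (fun y hy => (hF y (interior_subset hy)).differentiableAt.differentiableWithinAt)
    ((hF'.mono interior_subset).congr hderiv)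

lemma antitoneOn_of_hasDerivAt_nonpos (hD : Convex ℝ D)
    (hF : ∀ y ∈ D, HasDerivAt F (F' y) y) (hF' : ∀ y ∈ D, F' y ≤ 0) : AntitoneOn F D :=
  antitoneOn_of_deriv_nonpos hD (fun y hy => (hF y hy).continuousAt.continuousWithinAt)
    (fun y hy => (hF y (interior_subset hy)).differentiableAt.differentiableWithinAt)
    (fun y hy => (hF y (interior_subset hy)).deriv ▸ hF' y (interior_subset hy))

end Calculus

lemma AntitoneOn.mul_sub_nonneg_of_mul_sub_nonneg {φ ψ : ℝ → ℝ} {s t : Set ℝ}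
    (hφ : AntitoneOn φ s) (hψ : AntitoneOn ψ t) {a₁ a₂ b₁ b₂ : ℝ} (ha₁ : a₁ ∈ s) (ha₂ : a₂ ∈ s)
    (hb₁ : b₁ ∈ t) (hb₂ : b₂ ∈ t) (h : 0 ≤ (a₁ - a₂) * (b₁ - b₂)) :
    0 ≤ (φ a₁ - φ a₂) * (ψ b₁ - ψ b₂) := by
  rcases le_total a₁ a₂ with ha | ha <;> rcases le_total b₁ b₂ with hb | hb
  · exact mul_nonneg (sub_nonneg.2 (hφ ha₁ ha₂ ha)) (sub_nonneg.2 (hψ hb₁ hb₂ hb))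
  · rcases mul_eq_zero.1 (le_antisymm (mul_nonpos_of_nonpos_of_nonneg (sub_nonpos.2 ha)
      (sub_nonneg.2 hb)) h) with h | h <;> simp [sub_eq_zero.1 h]
  · rcases mul_eq_zero.1 (le_antisymm (mul_nonpos_of_nonneg_of_nonpos (sub_nonneg.2 ha)
      (sub_nonpos.2 hb)) h) with h | h <;> simp [sub_eq_zero.1 h]
  · exact mul_nonneg_of_nonpos_of_nonpos (sub_nonpos.2 (hφ ha₂ ha₁ ha))
      (sub_nonpos.2 (hψ hb₂ hb₁ hb))

lemma convexCombo_one_sub_mul_le {w p q p₁ p₂ q₁ q₂ : ℝ} (hw0 : 0 ≤ w) (hw1 : w ≤ 1)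
    (hp : 0 ≤ p) (hq : 0 ≤ q) (hpc : p ≤ w * p₁ + (1 - w) * p₂)
    (hqc : q ≤ w * q₁ + (1 - w) * q₂) (hsim : 0 ≤ (p₁ - p₂) * (q₁ - q₂)) :
    w * (1 - p₁ * q₁) + (1 - w) * (1 - p₂ * q₂) ≤ 1 - p * q := by
  have hchebyshev : 0 ≤ w * (1 - w) * ((p₁ - p₂) * (q₁ - q₂)) :=
    mul_nonneg (mul_nonneg hw0 (sub_nonneg.2 hw1)) hsim
  have hmul : p * q ≤ (w * p₁ + (1 - w) * p₂) * (w * q₁ + (1 - w) * q₂) :=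
    mul_le_mul hpc hqc hq (hp.trans hpc)
  calc w * (1 - p₁ * q₁) + (1 - w) * (1 - p₂ * q₂)
      = 1 - (w * p₁ + (1 - w) * p₂) * (w * q₁ + (1 - w) * q₂)
          - w * (1 - w) * ((p₁ - p₂) * (q₁ - q₂)) := by ring
    _ ≤ 1 - p * q := by linarith

lemma prod_le_prod_of_convexCombo_comp_perm_le {ι : Type*} [Fintype ι] {X Y : ι → ℝ}
    (σ : Equiv.Perm ι) {w : ℝ} (hw0 : 0 ≤ w) (hw1 : w ≤ 1) (hX : ∀ i, 0 ≤ X i)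
    (h : ∀ i, w * X i + (1 - w) * X (σ i) ≤ Y i) : ∏ i, X i ≤ ∏ i, Y i := by
  have hprod : 0 ≤ ∏ i, X i := prod_nonneg fun i _ => hX i
  calc ∏ i, X i = ∏ i, X i ^ w * X (σ i) ^ (1 - w) := by
        rw [prod_mul_distrib, Real.finsetProd_rpow _ _ (fun i _ => hX i),
          Equiv.prod_comp σ (fun i => X i ^ (1 - w)), Real.finsetProd_rpow _ _ (fun i _ => hX i),
          ← Real.rpow_add' hprod (by norm_num), add_sub_cancel, Real.rpow_one]
    _ ≤ ∏ i, Y i := prod_le_prod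
        (fun i _ => mul_nonneg (Real.rpow_nonneg (hX i) w) (Real.rpow_nonneg (hX (σ i)) _))
        fun i _ =>
          (Real.geom_mean_le_arith_mean2_weighted hw0 (sub_nonneg.2 hw1) (hX i) (hX (σ i))
            (add_sub_cancel w 1)).trans (h i)

theorem stmt_11_general {n : ℕ} (S f g : ℝ → ℝ)
    (hS : ∀ y ≥ (0 : ℝ), 0 < S y ∧ S y ≤ 1)
    (hS' : ∀ y ≥ (0 : ℝ), HasDerivAt S (-(f y)) y)
    (hf_nonneg : ∀ y ≥ (0 : ℝ), 0 ≤ f y)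
    (hf_anti : AntitoneOn f (Set.Ici 0))
    (hg : ∀ t > 0, 0 < g t ∧ g t < 1)
    (hg_anti : AntitoneOn g (Set.Ioi 0))
    (hg_conv : ConvexOn ℝ (Set.Ioi 0) g)
    (w : ℝ) (hw0 : 0 ≤ w) (hw1 : w ≤ 1)
    (π : Equiv.Perm (Fin n))
    (v α u β : Fin n → ℝ)
    (hv : ∀ i, 0 < v i) (hα : ∀ i, 0 < α i)
    (hu_def : ∀ j, u j = w * v j + (1 - w) * v (π j))
    (hβ_def : ∀ j, β j = w * α j + (1 - w) * α (π j))
    (hsimv : ∀ i j, 0 ≤ (v i - v j) * (α i - α j)) :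
    ∀ x ≥ (0 : ℝ),
      ∏ i, (1 - g (v i) * S (α i * x)) ≤ ∏ i, (1 - g (u i) * S (β i * x)) := by
  intro x hx
  have hw1' : 0 ≤ 1 - w := sub_nonneg.2 hw1
  have hS_conv : ConvexOn ℝ (Set.Ici 0) S :=
    convexOn_of_hasDerivAt_of_monotoneOn (convex_Ici 0) hS' hf_anti.neg
  have hS_anti : AntitoneOn S (Set.Ici 0) :=
    antitoneOn_of_hasDerivAt_nonpos (convex_Ici 0) hS' fun y hy => neg_nonpos.2 (hf_nonneg y hy)
  have hαx : ∀ i, α i * x ∈ Set.Ici 0 := fun i => mul_nonneg (hα i).le hx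
  refine prod_le_prod_of_convexCombo_comp_perm_le π hw0 hw1
    (fun i => sub_nonneg.2 (mul_le_one₀ (hg _ (hv i)).2.le (hS _ (hαx i)).1.le (hS _ (hαx i)).2))
    fun j => ?_
  have hu : u j ∈ Set.Ioi 0 :=
    hu_def j ▸ convex_Ioi 0 (hv j) (hv (π j)) hw0 hw1' (add_sub_cancel w 1)
  have hβx : β j * x = w * (α j * x) + (1 - w) * (α (π j) * x) := by rw [hβ_def j]; ring
  have hβx_mem : β j * x ∈ Set.Ici 0 :=
    hβx ▸ convex_Ici 0 (hαx j) (hαx (π j)) hw0 hw1' (add_sub_cancel w 1)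
  refine convexCombo_one_sub_mul_le hw0 hw1 (hg _ hu).1.le (hS _ hβx_mem).1.le ?_ ?_ ?_
  · simpa only [hu_def j, smul_eq_mul] using
      hg_conv.2 (hv j) (hv (π j)) hw0 hw1' (add_sub_cancel w 1)
  · simpa only [hβx, smul_eq_mul] using
      hS_conv.2 (hαx j) (hαx (π j)) hw0 hw1' (add_sub_cancel w 1)
  · refine hg_anti.mul_sub_nonneg_of_mul_sub_nonneg hS_anti
      (hv j) (hv (π j)) (hαx j) (hαx (π j)) ?_
    rw [← sub_mul, ← mul_assoc]
    exact mul_nonneg (hsimv j (π j)) hx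

/-- Theorem 3.10 (core comparison): scale-family severities, largest claim
amounts under a single T-transform of the parameter matrix, usual stochastic
order. -/
theorem stmt_11 {n : ℕ} (hn : 1 ≤ n) (S f g : ℝ → ℝ)
    (hS : ∀ y ≥ (0 : ℝ), 0 < S y ∧ S y ≤ 1)
    (hS' : ∀ y ≥ (0 : ℝ), HasDerivAt S (-(f y)) y)
    (hf_nonneg : ∀ y ≥ (0 : ℝ), 0 ≤ f y)
    (hf_anti : AntitoneOn f (Set.Ici 0))
    (hg : ∀ t > 0, 0 < g t ∧ g t < 1)
    (hg_anti : AntitoneOn g (Set.Ioi 0))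
    (hg_conv : ConvexOn ℝ (Set.Ioi 0) g)
    (w : ℝ) (hw0 : 0 ≤ w) (hw1 : w ≤ 1)
    (π : Equiv.Perm (Fin n))
    (v α u β : Fin n → ℝ)
    (hv : ∀ i, 0 < v i) (hα : ∀ i, 0 < α i)
    (hu_def : ∀ j, u j = w * v j + (1 - w) * v (π j))
    (hβ_def : ∀ j, β j = w * α j + (1 - w) * α (π j))
    (hsimv : ∀ i j, 0 ≤ (v i - v j) * (α i - α j))
    (hsimu : ∀ i j, 0 ≤ (u i - u j) * (β i - β j)) :
    ∀ x ≥ (0 : ℝ),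
      ∏ i, (1 - g (v i) * S (α i * x)) ≤ ∏ i, (1 - g (u i) * S (β i * x)) :=
  stmt_11_general S f g hS hS' hf_nonneg hf_anti hg hg_anti hg_conv w hw0 hw1 π v α u β hv hα hu_def
    hβ_def hsimv
end

section
/- Let n ≥ 1. Let s, ρ : ℝ → ℝ satisfy, on (0,∞): 0 < s(a) ≤ 1, s antitone, log∘s convex; ρ(a) ≥ 0, ρ antitone and ρ convex. Let p : Fin n → ℝ be a nonincreasing tuple with 0 < p i < 1 for all i, and let α, β : Fin n → ℝ be positive nondecreasing tuples with Σ_{i=1}^k α i ≤ Σ_{i=1}^k β i for every k = 1,…,n. Then Σ_{i=1}^n p i·s(α i)·ρ(α i)/(1 − p i·s(α i)) ≥ Σ_{i=1}^n p i·s(β i)·ρ(β i)/(1 − p i·s(β i)). -/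
/-!
Write `fᵢ = rhSummand s ρ pᵢ`, so that `fᵢ (βᵢ) - fᵢ (αᵢ) = dᵢ (βᵢ - αᵢ)` with `dᵢ` the secant
slope of `fᵢ` between `αᵢ` and `βᵢ`. Each `fᵢ` is antitone, so `dᵢ ≤ 0`. Each `fᵢ` is convex,
being the product of the convex antitone odds `pᵢ s / (1 - pᵢ s) = (1 - pᵢ s)⁻¹ - 1` (`s` is
log-convex, hence convex) and the convex antitone `ρ`; as `α` and `β` are nondecreasing, the
slope of `fᵢ` only grows when moving to the secant of index `j ≥ i`, and since `pⱼ ≤ pᵢ` makes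
`fᵢ - fⱼ` antitone, replacing `fᵢ` by `fⱼ` on that secant increases it further. So `d` is
nondecreasing and nonpositive, and Abel summation against the nonnegative prefix sums of
`β - α` gives `∑ dᵢ (βᵢ - αᵢ) ≤ 0`.
-/

open Finset

lemma ConvexOn.of_convexOn_log {S : Set ℝ} {f : ℝ → ℝ} (hf₀ : ∀ x ∈ S, 0 < f x)
    (hf : ConvexOn ℝ S fun x => Real.log (f x)) : ConvexOn ℝ S f := by
  refine ⟨hf.1, fun x hx y hy a b ha hb hab => ?_⟩
  have hexp := convexOn_exp.2 (Set.mem_univ (Real.log (f x))) (Set.mem_univ (Real.log (f y)))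
    ha hb hab
  simp only [smul_eq_mul, Real.exp_log (hf₀ x hx), Real.exp_log (hf₀ y hy)] at hexp ⊢
  calc f (a * x + b * y) = Real.exp (Real.log (f (a * x + b * y))) :=
        (Real.exp_log (hf₀ _ (hf.1 hx hy ha hb hab))).symm
    _ ≤ Real.exp (a * Real.log (f x) + b * Real.log (f y)) :=
        Real.exp_le_exp.2 (by simpa only [smul_eq_mul] using hf.2 hx hy ha hb hab)
    _ ≤ a * f x + b * f y := hexp

lemma ConcaveOn.convexOn_inv {S : Set ℝ} {f : ℝ → ℝ} (hf : ConcaveOn ℝ S f)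
    (hf₀ : ∀ x ∈ S, 0 < f x) : ConvexOn ℝ S fun x => (f x)⁻¹ := by
  refine ⟨hf.1, fun x hx y hy a b ha hb hab => ?_⟩
  have hfx := hf₀ x hx
  have hfy := hf₀ y hy
  have hcomb : 0 < a * f x + b * f y := by
    simpa only [smul_eq_mul, Set.mem_Ioi] using
      (convex_Ioi (0 : ℝ)) (Set.mem_Ioi.2 hfx) (Set.mem_Ioi.2 hfy) ha hb hab
  calc (f (a • x + b • y))⁻¹ ≤ (a * f x + b * f y)⁻¹ :=
        inv_anti₀ hcomb (by simpa only [smul_eq_mul] using hf.2 hx hy ha hb hab)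
    _ ≤ a • (f x)⁻¹ + b • (f y)⁻¹ := by
        simpa only [smul_eq_mul, zpow_neg_one] using
          (convexOn_zpow (𝕜 := ℝ) (-1)).2 (Set.mem_Ioi.2 hfx) (Set.mem_Ioi.2 hfy) ha hb hab

lemma ConvexOn.slope_le_slope_s12 {S : Set ℝ} {f : ℝ → ℝ} (hf : ConvexOn ℝ S f) {a b c d : ℝ}
    (ha : a ∈ S) (hb : b ∈ S) (hc : c ∈ S) (hd : d ∈ S) (hab : a ≠ b) (hcd : c ≠ d)
    (hac : a ≤ c) (hbd : b ≤ d) : slope f a b ≤ slope f c d := by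
  by_cases hbc : b = c
  · subst hbc
    have had : a ≠ d := by rintro rfl; exact hab (le_antisymm hac hbd)
    calc slope f a b ≤ slope f a d := hf.slope_mono ha ⟨hb, hab.symm⟩ ⟨hd, had.symm⟩ hbd
      _ = slope f d a := slope_comm f a d
      _ ≤ slope f d b := hf.slope_mono hd ⟨ha, had⟩ ⟨hb, hcd⟩ hac
      _ = slope f b d := slope_comm f d b
  · calc slope f a b = slope f b a := slope_comm f a b
      _ ≤ slope f b c := hf.slope_mono hb ⟨ha, hab⟩ ⟨hc, Ne.symm hbc⟩ hac
      _ = slope f c b := slope_comm f b c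
      _ ≤ slope f c d := hf.slope_mono hc ⟨hb, hbc⟩ ⟨hd, hcd.symm⟩ hbd

namespace prefixSum

variable {n : ℕ}

lemma zero_right (a : Fin n → ℝ) : prefixSum a 0 = 0 := by
  simp [prefixSum]

lemma succ (a : Fin n → ℝ) {k : ℕ} (hk : k < n) :
    prefixSum a (k + 1) = prefixSum a k + a ⟨k, hk⟩ := by
  have hfilter : univ.filter (fun i : Fin n => (i : ℕ) < k + 1) =
      insert ⟨k, hk⟩ (univ.filter fun i : Fin n => (i : ℕ) < k) := by
    ext i
    simp only [mem_filter, mem_univ, true_and, mem_insert, Fin.ext_iff]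
    omega
  rw [prefixSum, hfilter, sum_insert (by simp), add_comm, prefixSum]

lemma eq_sum (a : Fin n → ℝ) : prefixSum a n = ∑ i, a i := by
  simp [prefixSum]

lemma sub (a b : Fin n → ℝ) (k : ℕ) : prefixSum (a - b) k = prefixSum a k - prefixSum b k := by
  simp [prefixSum, sum_sub_distrib]

end prefixSum

lemma prefixSum_mul_le {n : ℕ} {d δ : Fin n → ℝ}
    (hδ : ∀ k, 1 ≤ k → k ≤ n → 0 ≤ prefixSum δ k)
    (hd : ∀ i j, i ≤ j → δ i ≠ 0 → δ j ≠ 0 → d i ≤ d j) :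
    ∀ k ≤ n, ∀ t, (∀ i : Fin n, (i : ℕ) < k → δ i ≠ 0 → d i ≤ t) →
      prefixSum (d * δ) k ≤ t * prefixSum δ k := by
  intro k
  induction k with
  | zero => intro _ t _; simp [prefixSum.zero_right]
  | succ k ih =>
    intro hk t ht
    have hkn : k < n := hk
    set m : Fin n := ⟨k, hkn⟩
    rw [prefixSum.succ _ hkn, prefixSum.succ _ hkn, Pi.mul_apply]
    by_cases hm : δ m = 0
    · rw [hm, mul_zero, add_zero, add_zero]
      exact ih hkn.le t fun i hi => ht i (by omega)
    · have hdm : d m ≤ t := ht m (by simp [m]) hm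
      have hprev := ih hkn.le (d m) fun i hi hδi => hd i m (Fin.mk_le_mk.2 hi.le) hδi hm
      have hpos : 0 ≤ prefixSum δ k + δ m := by
        rw [← prefixSum.succ _ hkn]; exact hδ (k + 1) (by omega) hk
      nlinarith

lemma sum_mul_nonpos_of_prefixSum_nonneg {n : ℕ} {d δ : Fin n → ℝ}
    (hδ : ∀ k, 1 ≤ k → k ≤ n → 0 ≤ prefixSum δ k)
    (hd : ∀ i j, i ≤ j → δ i ≠ 0 → δ j ≠ 0 → d i ≤ d j) (hd₀ : ∀ i, δ i ≠ 0 → d i ≤ 0) :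
    ∑ i, d i * δ i ≤ 0 := by
  have := prefixSum_mul_le hδ hd n le_rfl 0 fun i _ => hd₀ i
  rwa [zero_mul, prefixSum.eq_sum] at this

/-- A Tomić–Weyl inequality for the weak supermajorization of `α` by `β`, with
index-dependent functions. -/
theorem sum_le_sum_of_prefixSum_le {n : ℕ} {S : Set ℝ} {f : Fin n → ℝ → ℝ}
    (hconv : ∀ i, ConvexOn ℝ S (f i)) (hanti : ∀ i, AntitoneOn (f i) S)
    (hdiff : ∀ i j, i ≤ j → AntitoneOn (f i - f j) S) {α β : Fin n → ℝ}
    (hαS : ∀ i, α i ∈ S) (hβS : ∀ i, β i ∈ S) (hαm : Monotone α) (hβm : Monotone β)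
    (hmaj : ∀ k, 1 ≤ k → k ≤ n → prefixSum α k ≤ prefixSum β k) :
    ∑ i, f i (β i) ≤ ∑ i, f i (α i) := by
  set d : Fin n → ℝ := fun i => slope (f i) (α i) (β i)
  have hterm : ∀ i, f i (β i) - f i (α i) = d i * (β - α) i := fun i => by
    rw [Pi.sub_apply, mul_comm, ← smul_eq_mul, sub_smul_slope, vsub_eq_sub]
  have hd_mono : ∀ i j, i ≤ j → (β - α) i ≠ 0 → (β - α) j ≠ 0 → d i ≤ d j := by
    intro i j hij hi hj
    have hi' : α i ≠ β i := fun h => hi (by simp [h])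
    have hj' : α j ≠ β j := fun h => hj (by simp [h])
    have hslope_sub : slope (f i) (α j) (β j) - d j = slope (f i - f j) (α j) (β j) := by
      simp only [d, slope_def_field, Pi.sub_apply]
      ring
    calc d i ≤ slope (f i) (α j) (β j) :=
          (hconv i).slope_le_slope_s12 (hαS i) (hβS i) (hαS j) (hβS j) hi' hj' (hαm hij) (hβm hij)
      _ ≤ d j := by linarith [(hdiff i j hij).slope_nonpos (hαS j) (hβS j)]
  have hsum := sum_mul_nonpos_of_prefixSum_nonneg (d := d)
    (fun k hk hkn => by rw [prefixSum.sub]; linarith [hmaj k hk hkn]) hd_mono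
    (fun i _ => (hanti i).slope_nonpos (hαS i) (hβS i))
  rw [← sub_nonpos, ← sum_sub_distrib]
  simpa only [hterm] using hsum

/-- The summand `q F̄ r / (1 - q F̄)` of the reversed hazard rate of the largest claim, with
`s a = F̄(x; a)` and `ρ a = r(x; a)` at a fixed point `x`. -/
noncomputable def rhSummand (s ρ : ℝ → ℝ) (q a : ℝ) : ℝ :=
  q * s a * ρ a / (1 - q * s a)

lemma one_sub_mul_pos {q u : ℝ} (hq₀ : 0 ≤ q) (hq₁ : q < 1) (hu : u ≤ 1) : 0 < 1 - q * u := by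
  nlinarith

section rhSummand

variable {s ρ : ℝ → ℝ}

lemma rhSummand_sub_eq {q₁ q₂ a : ℝ} (h₁ : 1 - q₁ * s a ≠ 0) (h₂ : 1 - q₂ * s a ≠ 0) :
    rhSummand s ρ q₁ a - rhSummand s ρ q₂ a =
      (q₁ - q₂) * s a * ρ a / ((1 - q₁ * s a) * (1 - q₂ * s a)) := by
  rw [rhSummand, rhSummand, div_sub_div _ _ h₁ h₂]
  ring

lemma antitoneOn_rhSummand_sub (hs_pos : ∀ a > 0, 0 < s a) (hs_le : ∀ a > 0, s a ≤ 1)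
    (hs_anti : AntitoneOn s (Set.Ioi 0)) (hρ_nonneg : ∀ a > 0, 0 ≤ ρ a)
    (hρ_anti : AntitoneOn ρ (Set.Ioi 0)) {q₁ q₂ : ℝ} (hq₂ : 0 ≤ q₂) (hq : q₂ ≤ q₁)
    (hq₁ : q₁ < 1) : AntitoneOn (rhSummand s ρ q₁ - rhSummand s ρ q₂) (Set.Ioi 0) := by
  intro x (hx : 0 < x) y (hy : 0 < y) hxy
  have hq₁₀ : 0 ≤ q₁ := hq₂.trans hq
  have hq₂₁ : q₂ < 1 := hq.trans_lt hq₁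
  have hq₁x := one_sub_mul_pos hq₁₀ hq₁ (hs_le x hx)
  have hq₂x := one_sub_mul_pos hq₂ hq₂₁ (hs_le x hx)
  have hq₁y := one_sub_mul_pos hq₁₀ hq₁ (hs_le y hy)
  have hq₂y := one_sub_mul_pos hq₂ hq₂₁ (hs_le y hy)
  simp only [Pi.sub_apply]
  rw [rhSummand_sub_eq hq₁y.ne' hq₂y.ne', rhSummand_sub_eq hq₁x.ne' hq₂x.ne']
  have hsxy := hs_anti hx hy hxy
  have hdq := sub_nonneg.2 hq
  have hsx := (hs_pos x hx).le
  apply div_le_div₀ (mul_nonneg (mul_nonneg hdq hsx) (hρ_nonneg x hx)) _ (mul_pos hq₁x hq₂x)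
  · gcongr
  · have hρxy := hρ_anti hx hy hxy
    have hρy := hρ_nonneg y hy
    gcongr

lemma antitoneOn_rhSummand (hs_pos : ∀ a > 0, 0 < s a) (hs_le : ∀ a > 0, s a ≤ 1)
    (hs_anti : AntitoneOn s (Set.Ioi 0)) (hρ_nonneg : ∀ a > 0, 0 ≤ ρ a)
    (hρ_anti : AntitoneOn ρ (Set.Ioi 0)) {q : ℝ} (hq₀ : 0 ≤ q) (hq₁ : q < 1) :
    AntitoneOn (rhSummand s ρ q) (Set.Ioi 0) := by
  have h := antitoneOn_rhSummand_sub hs_pos hs_le hs_anti hρ_nonneg hρ_anti le_rfl hq₀ hq₁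
  have hzero : rhSummand s ρ 0 = 0 := by
    funext a
    simp [rhSummand]
  rwa [hzero, sub_zero] at h

lemma convexOn_rhSummand (hs_pos : ∀ a > 0, 0 < s a) (hs_le : ∀ a > 0, s a ≤ 1)
    (hs_anti : AntitoneOn s (Set.Ioi 0))
    (hs_logconv : ConvexOn ℝ (Set.Ioi 0) (fun a => Real.log (s a)))
    (hρ_nonneg : ∀ a > 0, 0 ≤ ρ a) (hρ_anti : AntitoneOn ρ (Set.Ioi 0))
    (hρ_conv : ConvexOn ℝ (Set.Ioi 0) ρ) {q : ℝ} (hq₀ : 0 ≤ q) (hq₁ : q < 1) :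
    ConvexOn ℝ (Set.Ioi 0) (rhSummand s ρ q) := by
  have hden : ∀ a ∈ Set.Ioi (0 : ℝ), 0 < 1 - q * s a := fun a ha =>
    one_sub_mul_pos hq₀ hq₁ (hs_le a ha)
  have hden_conc : ConcaveOn ℝ (Set.Ioi 0) fun a => 1 - q * s a :=
    (concaveOn_const 1 (convex_Ioi 0)).sub ((ConvexOn.of_convexOn_log hs_pos hs_logconv).smul hq₀)
  -- the odds `q s / (1 - q s) = (1 - q s)⁻¹ - 1` is `rhSummand` with `ρ = 1`
  have hodds_conv : ConvexOn ℝ (Set.Ioi 0) (rhSummand s 1 q) := by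
    refine ((hden_conc.convexOn_inv hden).sub (concaveOn_const 1 (convex_Ioi 0))).congr
      fun a ha => ?_
    have := (hden a ha).ne'
    simp only [rhSummand, Pi.sub_apply, Pi.one_apply, mul_one]
    field_simp
    ring
  have hodds_anti : AntitoneOn (rhSummand s 1 q) (Set.Ioi 0) :=
    antitoneOn_rhSummand hs_pos hs_le hs_anti (fun _ _ => zero_le_one) antitoneOn_const hq₀ hq₁
  have hodds_nonneg : ∀ a ∈ Set.Ioi (0 : ℝ), 0 ≤ rhSummand s 1 q a := fun a (ha : 0 < a) =>
    div_nonneg (by simpa using mul_nonneg hq₀ (hs_pos a ha).le) (hden a ha).le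
  refine (hodds_conv.mul hρ_conv hodds_nonneg hρ_nonneg
    (hodds_anti.monovaryOn hρ_anti)).congr fun a _ => ?_
  simp only [rhSummand, Pi.mul_apply, Pi.one_apply, mul_one]
  ring

end rhSummand

theorem stmt_12_general {n : ℕ} (s ρ : ℝ → ℝ)
    (hs_pos : ∀ a > 0, 0 < s a) (hs_le : ∀ a > 0, s a ≤ 1)
    (hs_anti : AntitoneOn s (Set.Ioi 0))
    (hs_logconv : ConvexOn ℝ (Set.Ioi 0) (fun a => Real.log (s a)))
    (hρ_nonneg : ∀ a > 0, 0 ≤ ρ a)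
    (hρ_anti : AntitoneOn ρ (Set.Ioi 0))
    (hρ_conv : ConvexOn ℝ (Set.Ioi 0) ρ)
    (p α β : Fin n → ℝ)
    (hp : ∀ i, 0 < p i ∧ p i < 1) (hp_anti : Antitone p)
    (hα : ∀ i, 0 < α i) (hβ : ∀ i, 0 < β i)
    (hαm : Monotone α) (hβm : Monotone β)
    (hmaj : ∀ k, 1 ≤ k → k ≤ n → prefixSum α k ≤ prefixSum β k) :
    ∑ i, p i * s (β i) * ρ (β i) / (1 - p i * s (β i)) ≤
      ∑ i, p i * s (α i) * ρ (α i) / (1 - p i * s (α i)) :=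
  sum_le_sum_of_prefixSum_le (f := fun i => rhSummand s ρ (p i))
    (fun i => convexOn_rhSummand hs_pos hs_le hs_anti hs_logconv hρ_nonneg hρ_anti hρ_conv
      (hp i).1.le (hp i).2)
    (fun i => antitoneOn_rhSummand hs_pos hs_le hs_anti hρ_nonneg hρ_anti (hp i).1.le (hp i).2)
    (fun i j hij => antitoneOn_rhSummand_sub hs_pos hs_le hs_anti hρ_nonneg hρ_anti
      (hp j).1.le (hp_anti hij) (hp i).2)
    hα hβ hαm hβm hmaj

/-- Theorem 3.11: largest claim amounts, reversed hazard rate order,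
weak supermajorization of the severity parameters. -/
theorem stmt_12 {n : ℕ} (hn : 1 ≤ n) (s ρ : ℝ → ℝ)
    (hs_pos : ∀ a > 0, 0 < s a) (hs_le : ∀ a > 0, s a ≤ 1)
    (hs_anti : AntitoneOn s (Set.Ioi 0))
    (hs_logconv : ConvexOn ℝ (Set.Ioi 0) (fun a => Real.log (s a)))
    (hρ_nonneg : ∀ a > 0, 0 ≤ ρ a)
    (hρ_anti : AntitoneOn ρ (Set.Ioi 0))
    (hρ_conv : ConvexOn ℝ (Set.Ioi 0) ρ)
    (p α β : Fin n → ℝ)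
    (hp : ∀ i, 0 < p i ∧ p i < 1) (hp_anti : Antitone p)
    (hα : ∀ i, 0 < α i) (hβ : ∀ i, 0 < β i)
    (hαm : Monotone α) (hβm : Monotone β)
    (hmaj : ∀ k, 1 ≤ k → k ≤ n → prefixSum α k ≤ prefixSum β k) :
    ∑ i, p i * s (β i) * ρ (β i) / (1 - p i * s (β i)) ≤
      ∑ i, p i * s (α i) * ρ (α i) / (1 - p i * s (α i)) :=
  stmt_12_general s ρ hs_pos hs_le hs_anti hs_logconv hρ_nonneg hρ_anti hρ_conv p α β hp hp_anti hα
    hβ hαm hβm hmaj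
end
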